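/- arXiv:2507.09688 — 5 statements merged into one kernel-verified Lean document; each statement's English description precedes it below -/
import Mathlib

section
/- In the network on nodes {s, v1, v2, v3, t} with arcs (s,v1), (s,v2), (v1,v2), (v2,v3), (v2,t), (v3,t), all having capacity 1, transit time 1, and cost 1, and with time horizon T = 6, consider the static flow sending one unit over every arc. The path decomposition y with y(s,v1,v2,v3,t) = 1 and y(s,v2,t) = 1 induces a temporally repeated flow of value 6 with peak cost 4, while the path decomposition y' with y'(s,v1,v2,t) = 1 and y'(s,v2,v3,t) = 1 induces a temporally repeated flow of value 6 with peak cost 6. In particular, the peak cost of a temporally repeated flow depends not only on the underlying static flow but also on the chosen path decomposition. -/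
open MeasureTheory

/-- A network over time: a digraph with arc capacities `u`, costs `c`,
transit times `τ`, a source `s` and a sink `t`. -/
structure Network (V : Type) (A : Type) where
  tail : A → V
  head : A → V
  u : A → ℕ
  c : A → ℕ
  τ : A → ℕ
  s : V
  t : V

namespace Network

variable {V A : Type}

/-- The node sequence visited by a list of arcs. -/
def nodes (N : Network V A) : List A → List V
  | [] => []
  | a :: rest => N.tail a :: ((a :: rest).map N.head)

/-- `p` is a simple `s`-`t` path (a non-empty list of consecutive arcs starting at
the source, ending at the sink and visiting pairwise distinct nodes). -/
def IsSTPath (N : Network V A) (p : List A) : Prop :=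
  p ≠ [] ∧ List.Chain' (fun a b => N.head a = N.tail b) p ∧
    (∀ a ∈ p.head?, N.tail a = N.s) ∧ (∀ a ∈ p.getLast?, N.head a = N.t) ∧
    (N.nodes p).Nodup

/-- `p` is a non-empty closed walk, i.e. a cycle. -/
def IsCycle (N : Network V A) (p : List A) : Prop :=
  p ≠ [] ∧ List.Chain' (fun a b => N.head a = N.tail b) p ∧
    ∀ a ∈ p.head?, ∀ b ∈ p.getLast?, N.head b = N.tail a

/-- The network contains no directed cycle. -/
def Acyclic (N : Network V A) : Prop := ∀ p : List A, ¬ N.IsCycle p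

/-- Transit time (length) of a path. -/
def pathTime (N : Network V A) (p : List A) : ℕ := (p.map N.τ).sum

/-- Bottleneck capacity of a path. -/
noncomputable def bottleneck (N : Network V A) (p : List A) : ℕ :=
  sInf (N.u '' {a | a ∈ p})

section
variable [DecidableEq A]

/-- Transit time of the part of `p` strictly before arc `a`. -/
def prefixTime (N : Network V A) (p : List A) (a : A) : ℕ :=
  ((p.takeWhile fun b => b ≠ a).map N.τ).sum

/-- Transit time of the part of `p` from arc `a` onwards. -/
def suffixTime (N : Network V A) (p : List A) (a : A) : ℕ :=
  ((p.dropWhile fun b => b ≠ a).map N.τ).sum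

/-- Inflow rate into arc `a` at time `θ` of the temporally repeated flow with
horizon `T` induced by the path decomposition `y`. -/
noncomputable def trRate (N : Network V A) (y : List A → ℝ) (T : ℝ) (a : A) (θ : ℝ) : ℝ :=
  ∑ᶠ p ∈ {p : List A | N.IsSTPath p ∧ (N.pathTime p : ℝ) ≤ T ∧ a ∈ p ∧
    (N.prefixTime p a : ℝ) ≤ θ ∧ (N.suffixTime p a : ℝ) < T - θ}, y p

/-- Static flow on arc `a` induced by the path decomposition `y`. -/
noncomputable def staticOf (N : Network V A) (y : List A → ℝ) (a : A) : ℝ :=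
  ∑ᶠ p ∈ {p : List A | a ∈ p}, y p

/-- `y` is a feasible (capacity-respecting) path decomposition of a static flow. -/
def IsDecomposition (N : Network V A) (y : List A → ℝ) : Prop :=
  (∀ p, 0 ≤ y p) ∧ (∀ p, y p ≠ 0 → N.IsSTPath p) ∧
    (Function.support y).Finite ∧ ∀ a : A, N.staticOf y a ≤ N.u a

/-- Value of the temporally repeated flow induced by `y` with horizon `T`. -/
noncomputable def trValue (N : Network V A) (y : List A → ℝ) (T : ℝ) : ℝ :=
  ∑ᶠ p ∈ {p : List A | N.IsSTPath p ∧ (N.pathTime p : ℝ) ≤ T}, y p * (T - N.pathTime p)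

/-- Amount of flow of the TR flow induced by `y` that has reached the sink by time `θ`. -/
noncomputable def arrTR (N : Network V A) (y : List A → ℝ) (θ : ℝ) : ℝ :=
  ∑ᶠ p ∈ {p : List A | N.IsSTPath p ∧ (N.pathTime p : ℝ) ≤ θ}, y p * (θ - N.pathTime p)

end

/-- All flow rates of the decomposition are (nonnegative) integers. -/
def IsIntegral (y : List A → ℝ) : Prop := ∀ p, ∃ n : ℕ, y p = n

section
variable [Fintype A]

/-- Cost of a flow over time `f` at time point `θ`. -/
noncomputable def costAt (N : Network V A) (f : A → ℝ → ℝ) (θ : ℝ) : ℝ :=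
  ∑ a : A, (N.c a : ℝ) * ∫ ξ in (θ - (N.τ a : ℝ))..θ, f a ξ

/-- Peak cost of a flow over time `f` with horizon `T`. -/
noncomputable def peakCost (N : Network V A) (f : A → ℝ → ℝ) (T : ℝ) : ℝ :=
  sSup (N.costAt f '' Set.Ico 0 T)

/-- Peak cost of the TR flow induced by the decomposition `y`. -/
noncomputable def trPeakCost [DecidableEq A] (N : Network V A) (y : List A → ℝ) (T : ℝ) : ℝ :=
  N.peakCost (N.trRate y T) T

variable [DecidableEq V]

/-- Cumulative flow having entered node `v` by time `θ`. -/
noncomputable def inflowBy (N : Network V A) (f : A → ℝ → ℝ) (v : V) (θ : ℝ) : ℝ :=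
  ∑ a ∈ Finset.univ.filter (fun a => N.head a = v), ∫ ξ in (0:ℝ)..(θ - (N.τ a : ℝ)), f a ξ

/-- Cumulative flow having left node `v` by time `θ`. -/
noncomputable def outflowBy (N : Network V A) (f : A → ℝ → ℝ) (v : V) (θ : ℝ) : ℝ :=
  ∑ a ∈ Finset.univ.filter (fun a => N.tail a = v), ∫ ξ in (0:ℝ)..θ, f a ξ

/-- A feasible flow over time with horizon `T`. -/
def IsFlowOverTime (N : Network V A) (T : ℝ) (f : A → ℝ → ℝ) : Prop :=
  (∀ a, Measurable (f a)) ∧ (∀ a θ, 0 ≤ f a θ) ∧ (∀ a θ, f a θ ≤ N.u a) ∧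
    (∀ a θ, T - (N.τ a : ℝ) < θ → f a θ = 0) ∧ (∀ a θ, θ < 0 → f a θ = 0) ∧
    ∀ v, v ≠ N.s → v ≠ N.t → ∀ θ ∈ Set.Ico (0:ℝ) T,
      N.outflowBy f v θ ≤ N.inflowBy f v θ

/-- Value of a flow over time with horizon `T`. -/
noncomputable def fotValue (N : Network V A) (T : ℝ) (f : A → ℝ → ℝ) : ℝ :=
  N.outflowBy f N.s T - N.inflowBy f N.s T

/-- Amount of flow of a flow over time arrived at the sink by time `θ`. -/
noncomputable def arrivedBy (N : Network V A) (f : A → ℝ → ℝ) (θ : ℝ) : ℝ :=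
  N.inflowBy f N.t θ - N.outflowBy f N.t θ

/-- Feasibility of a static `s`-`t` flow. -/
def IsStaticFlow (N : Network V A) (x : A → ℝ) : Prop :=
  (∀ a, 0 ≤ x a) ∧ (∀ a, x a ≤ N.u a) ∧
    ∀ v, v ≠ N.s → v ≠ N.t →
      ∑ a ∈ Finset.univ.filter (fun a => N.head a = v), x a =
      ∑ a ∈ Finset.univ.filter (fun a => N.tail a = v), x a

/-- Value of a static `s`-`t` flow. -/
noncomputable def staticValue (N : Network V A) (x : A → ℝ) : ℝ :=
  ∑ a ∈ Finset.univ.filter (fun a => N.tail a = N.s), x a -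
  ∑ a ∈ Finset.univ.filter (fun a => N.head a = N.s), x a

end

end Network

open Network

/-- The network of Remark 2.9: nodes `s = 0, v₁ = 1, v₂ = 2, v₃ = 3, t = 4`, arcs
`a₀=(s,v₁), a₁=(s,v₂), a₂=(v₁,v₂), a₃=(v₂,v₃), a₄=(v₂,t), a₅=(v₃,t)`,
all with capacity, transit time and cost equal to `1`. -/
def N₀ : Network (Fin 5) (Fin 6) where
  tail := ![0, 0, 1, 2, 2, 3]
  head := ![1, 2, 2, 3, 4, 4]
  u := fun _ => 1
  c := fun _ => 1
  τ := fun _ => 1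
  s := 0
  t := 4

/-- The path `(s, v₁, v₂, v₃, t)`. -/
def pA : List (Fin 6) := [0, 2, 3, 5]
/-- The path `(s, v₂, t)`. -/
def pB : List (Fin 6) := [1, 4]
/-- The path `(s, v₁, v₂, t)`. -/
def pC : List (Fin 6) := [0, 2, 4]
/-- The path `(s, v₂, v₃, t)`. -/
def pD : List (Fin 6) := [1, 3, 5]

/-- First path decomposition: one unit on `(s,v₁,v₂,v₃,t)` and one on `(s,v₂,t)`. -/
noncomputable def y₀ : List (Fin 6) → ℝ := fun p => if p = pA ∨ p = pB then 1 else 0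

/-- Second path decomposition: one unit on `(s,v₁,v₂,t)` and one on `(s,v₂,v₃,t)`. -/
noncomputable def y₀' : List (Fin 6) → ℝ := fun p => if p = pC ∨ p = pD then 1 else 0

/-!
Each decomposition uses two arc-disjoint unit-rate paths, so on every arc the TR flow is the
indicator of a window of length `T - τ(p)`, and since all transit times and costs are `1` the cost
at time `θ` is the total overlap of the six windows with `[θ - 1, θ]`. The path `(s,v₁,v₂,v₃,t)` is
fed only during `[0, 2)` and its consecutive arc windows tile `[0, 4)` and `[1, 5)`, so it never
holds more than two units; neither does `(s,v₂,t)`, which has two arcs. Hence the first cost never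
exceeds `4`, attained at `θ = 3`. For the second decomposition all six windows contain `[2, 3]`, so
the cost at `θ = 3` is `6`.
-/

open Set

theorem finsum_mem_eq_indicator_add_indicator {α M : Type*} [AddCommMonoid M] [DecidableEq α]
    {f : α → M} {p q : α} (hpq : p ≠ q) (hf : Function.support f ⊆ {p, q}) (S : Set α) :
    ∑ᶠ x ∈ S, f x = S.indicator f p + S.indicator f q := by
  rw [finsum_mem_def, finsum_eq_sum_of_support_subset _ (s := {p, q}), Finset.sum_pair hpq]
  simpa [support_indicator] using inter_subset_right.trans hf

/-- The length of `[a, b] ∩ [l, r)`. -/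
noncomputable def overlapLength (a b l r : ℝ) : ℝ := max (min b r - max a l) 0

theorem integral_indicator_Ico_one {a b : ℝ} (hab : a ≤ b) (l r : ℝ) :
    ∫ x in a..b, (Ico l r).indicator 1 x = overlapLength a b l r := by
  rw [intervalIntegral.integral_of_le hab, MeasureTheory.setIntegral_indicator measurableSet_Ico,
    Pi.one_def, MeasureTheory.setIntegral_const, MeasureTheory.measureReal_congr
      ((MeasureTheory.ae_eq_refl (Ioc a b)).inter MeasureTheory.Ico_ae_eq_Ioc),
    Ioc_inter_Ioc, Real.volume_real_Ioc, smul_eq_mul, mul_one, overlapLength]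

theorem overlapLength_le {a b : ℝ} (hab : a ≤ b) (l r : ℝ) : overlapLength a b l r ≤ b - a := by
  refine max_le ?_ (sub_nonneg.2 hab)
  gcongr
  · exact min_le_left _ _
  · exact le_max_left _ _

theorem overlapLength_add {l m r : ℝ} (hlm : l ≤ m) (hmr : m ≤ r) (a b : ℝ) :
    overlapLength a b l m + overlapLength a b m r = overlapLength a b l r := by
  simp only [overlapLength, max_def, min_def]
  split_ifs <;> linarith

namespace Network

variable {V A : Type}

section
variable [DecidableEq A]

noncomputable def pathPair (p q : List A) : List A → ℝ := fun x => if x = p ∨ x = q then 1 else 0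

theorem pathPair_comm (p q : List A) : pathPair p q = pathPair q p := by
  ext x; simp only [pathPair, or_comm]

theorem support_pathPair_subset (p q : List A) : Function.support (pathPair p q) ⊆ {p, q} := by
  intro x hx
  by_contra h
  simp_all [pathPair]

variable (N : Network V A)

/-- The TR flow along `p` enters arc `a` exactly during this window. -/
def window (T : ℝ) (p : List A) (a : A) : Set ℝ :=
  Ico (N.prefixTime p a : ℝ) (T - N.suffixTime p a)

variable {p q : List A} (hpq : p ≠ q)
include hpq

theorem finsum_mem_pathPair_mul (g : List A → ℝ) (S : Set (List A)) :
    ∑ᶠ x ∈ S, pathPair p q x * g x = S.indicator g p + S.indicator g q := by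
  rw [finsum_mem_eq_indicator_add_indicator hpq
    ((Function.support_mul_subset_left _ _).trans (support_pathPair_subset p q))]
  classical
  simp [indicator_apply, pathPair, hpq, hpq.symm]

theorem finsum_mem_pathPair (S : Set (List A)) :
    ∑ᶠ x ∈ S, pathPair p q x = S.indicator 1 p + S.indicator 1 q := by
  simpa using finsum_mem_pathPair_mul hpq 1 S

theorem staticOf_pathPair (a : A) :
    N.staticOf (pathPair p q) a = (if a ∈ p then 1 else 0) + (if a ∈ q then 1 else 0) := by
  rw [staticOf, finsum_mem_pathPair hpq]
  simp [indicator_apply]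

theorem trValue_pathPair (hp : N.IsSTPath p) (hq : N.IsSTPath q) {T : ℝ}
    (hTp : (N.pathTime p : ℝ) ≤ T) (hTq : (N.pathTime q : ℝ) ≤ T) :
    N.trValue (pathPair p q) T = (T - N.pathTime p) + (T - N.pathTime q) := by
  rw [trValue, finsum_mem_pathPair_mul hpq]
  simp [hp, hq, hTp, hTq]

theorem isDecomposition_pathPair (hp : N.IsSTPath p) (hq : N.IsSTPath q)
    (hu : ∀ a, N.staticOf (pathPair p q) a ≤ N.u a) : N.IsDecomposition (pathPair p q) := by
  refine ⟨fun x => ?_, fun x hx => ?_, (toFinite {p, q}).subset (support_pathPair_subset p q), hu⟩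
  · unfold pathPair; split_ifs <;> norm_num
  · rcases support_pathPair_subset p q hx with rfl | rfl
    exacts [hp, hq]

theorem trRate_pathPair_of_mem_left (hp : N.IsSTPath p) {T : ℝ} (hTp : (N.pathTime p : ℝ) ≤ T)
    {a : A} (hap : a ∈ p) (haq : a ∉ q) :
    N.trRate (pathPair p q) T a = (N.window T p a).indicator 1 := by
  ext θ
  rw [trRate, finsum_mem_pathPair hpq]
  classical
  simp [window, indicator_apply, hp, hTp, hap, haq, lt_sub_comm]

theorem trRate_pathPair_of_disjoint (hp : N.IsSTPath p) (hq : N.IsSTPath q) {T : ℝ}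
    (hTp : (N.pathTime p : ℝ) ≤ T) (hTq : (N.pathTime q : ℝ) ≤ T) (hdisj : ∀ a ∈ p, a ∉ q)
    {a : A} (ha : a ∈ p ∨ a ∈ q) :
    N.trRate (pathPair p q) T a = (N.window T (if a ∈ p then p else q) a).indicator 1 := by
  by_cases hap : a ∈ p
  · rw [if_pos hap, N.trRate_pathPair_of_mem_left hpq hp hTp hap (hdisj a hap)]
  · rw [if_neg hap, pathPair_comm,
      N.trRate_pathPair_of_mem_left hpq.symm hq hTq (ha.resolve_left hap) hap]

end

section
variable [Fintype A] (N : Network V A) {f : A → ℝ → ℝ}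

theorem costAt_of_indicator {l r : A → ℝ} (hf : ∀ a, f a = (Ico (l a) (r a)).indicator 1)
    (θ : ℝ) : N.costAt f θ = ∑ a, (N.c a : ℝ) * overlapLength (θ - N.τ a) θ (l a) (r a) := by
  simp only [costAt, hf, integral_indicator_Ico_one (sub_le_self θ (Nat.cast_nonneg _))]

theorem peakCost_eq_of_forall_le_of_eq {T M : ℝ} (hle : ∀ θ ∈ Ico 0 T, N.costAt f θ ≤ M)
    {θ₀ : ℝ} (hθ₀ : θ₀ ∈ Ico 0 T) (hM : N.costAt f θ₀ = M) : N.peakCost f T = M :=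
  IsGreatest.csSup_eq ⟨⟨θ₀, hθ₀, hM⟩, by rintro _ ⟨θ, hθ, rfl⟩; exact hle θ hθ⟩

end

end Network

open Network

theorem isSTPath_pA : N₀.IsSTPath pA := by simp +decide [IsSTPath, List.Chain']
theorem isSTPath_pB : N₀.IsSTPath pB := by simp +decide [IsSTPath, List.Chain']
theorem isSTPath_pC : N₀.IsSTPath pC := by simp +decide [IsSTPath, List.Chain']
theorem isSTPath_pD : N₀.IsSTPath pD := by simp +decide [IsSTPath, List.Chain']

theorem y₀_eq_pathPair : y₀ = pathPair pA pB := rfl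
theorem y₀'_eq_pathPair : y₀' = pathPair pC pD := rfl

theorem trRate_y₀ (a : Fin 6) :
    N₀.trRate y₀ 6 a = (Ico (![0, 0, 1, 2, 1, 3] a) (![2, 4, 3, 4, 5, 5] a)).indicator 1 := by
  rw [y₀_eq_pathPair, N₀.trRate_pathPair_of_disjoint (by decide) isSTPath_pA isSTPath_pB
    (by norm_num +decide [pathTime, pA, N₀]) (by norm_num +decide [pathTime, pB, N₀]) (by decide)
    (by revert a; decide)]
  fin_cases a <;> norm_num +decide [window, prefixTime, suffixTime, pA, pB, N₀]

theorem trRate_y₀' (a : Fin 6) :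
    N₀.trRate y₀' 6 a = (Ico (![0, 0, 1, 1, 2, 2] a) (![3, 3, 4, 4, 5, 5] a)).indicator 1 := by
  rw [y₀'_eq_pathPair, N₀.trRate_pathPair_of_disjoint (by decide) isSTPath_pC isSTPath_pD
    (by norm_num +decide [pathTime, pC, N₀]) (by norm_num +decide [pathTime, pD, N₀]) (by decide)
    (by revert a; decide)]
  fin_cases a <;> norm_num +decide [window, prefixTime, suffixTime, pC, pD, N₀]

theorem costAt_y₀ (θ : ℝ) :
    N₀.costAt (N₀.trRate y₀ 6) θ =
      overlapLength (θ - 1) θ 0 2 + overlapLength (θ - 1) θ 0 4 + overlapLength (θ - 1) θ 1 3 +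
      overlapLength (θ - 1) θ 2 4 + overlapLength (θ - 1) θ 1 5 + overlapLength (θ - 1) θ 3 5 := by
  rw [N₀.costAt_of_indicator trRate_y₀, Fin.sum_univ_six]
  simp [N₀, Matrix.cons_val]

theorem costAt_y₀' (θ : ℝ) :
    N₀.costAt (N₀.trRate y₀' 6) θ =
      overlapLength (θ - 1) θ 0 3 + overlapLength (θ - 1) θ 0 3 + overlapLength (θ - 1) θ 1 4 +
      overlapLength (θ - 1) θ 1 4 + overlapLength (θ - 1) θ 2 5 + overlapLength (θ - 1) θ 2 5 := by
  rw [N₀.costAt_of_indicator trRate_y₀', Fin.sum_univ_six]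
  simp [N₀, Matrix.cons_val]

theorem staticOf_y₀ (a : Fin 6) : N₀.staticOf y₀ a = 1 := by
  rw [y₀_eq_pathPair, N₀.staticOf_pathPair (by decide)]
  fin_cases a <;> norm_num +decide [pA, pB]

theorem staticOf_y₀' (a : Fin 6) : N₀.staticOf y₀' a = 1 := by
  rw [y₀'_eq_pathPair, N₀.staticOf_pathPair (by decide)]
  fin_cases a <;> norm_num +decide [pC, pD]

theorem isDecomposition_y₀ : N₀.IsDecomposition y₀ :=
  N₀.isDecomposition_pathPair (by decide) isSTPath_pA isSTPath_pB fun a => by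
    rw [← y₀_eq_pathPair, staticOf_y₀]; simp [N₀]

theorem isDecomposition_y₀' : N₀.IsDecomposition y₀' :=
  N₀.isDecomposition_pathPair (by decide) isSTPath_pC isSTPath_pD fun a => by
    rw [← y₀'_eq_pathPair, staticOf_y₀']; simp [N₀]

theorem trValue_y₀ : N₀.trValue y₀ 6 = 6 := by
  rw [y₀_eq_pathPair, N₀.trValue_pathPair (by decide) isSTPath_pA isSTPath_pB] <;>
    norm_num +decide [pathTime, pA, pB, N₀]

theorem trValue_y₀' : N₀.trValue y₀' 6 = 6 := by
  rw [y₀'_eq_pathPair, N₀.trValue_pathPair (by decide) isSTPath_pC isSTPath_pD] <;>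
    norm_num +decide [pathTime, pC, pD, N₀]

theorem trPeakCost_y₀ : N₀.trPeakCost y₀ 6 = 4 := by
  refine N₀.peakCost_eq_of_forall_le_of_eq (fun θ _ => ?_) (θ₀ := 3) (by norm_num)
    (by rw [costAt_y₀]; norm_num [overlapLength])
  have hle := overlapLength_le (sub_le_self θ zero_le_one)
  have h024 := overlapLength_add (by norm_num : (0 : ℝ) ≤ 2) (by norm_num : (2 : ℝ) ≤ 4) (θ - 1) θ
  have h135 := overlapLength_add (by norm_num : (1 : ℝ) ≤ 3) (by norm_num : (3 : ℝ) ≤ 5) (θ - 1) θ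
  rw [costAt_y₀]
  linarith [hle 0 4, hle 1 5]

theorem trPeakCost_y₀' : N₀.trPeakCost y₀' 6 = 6 := by
  refine N₀.peakCost_eq_of_forall_le_of_eq (fun θ _ => ?_) (θ₀ := 3) (by norm_num)
    (by rw [costAt_y₀']; norm_num [overlapLength])
  have hle := overlapLength_le (sub_le_self θ zero_le_one)
  rw [costAt_y₀']
  linarith [hle 0 3, hle 1 4, hle 2 5]

/-- both decompositions decompose the static flow sending one unit over
every arc; with time horizon `T = 6` the first induces a TR flow of value `6` with
peak cost `4`, the second a TR flow of value `6` with peak cost `6`.  In particular,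
the peak cost of a TR flow depends on the chosen path decomposition, not only on the
underlying static flow. -/
theorem stmt0 :
    N₀.IsDecomposition y₀ ∧ N₀.IsDecomposition y₀' ∧
    (∀ a, N₀.staticOf y₀ a = 1) ∧ (∀ a, N₀.staticOf y₀' a = 1) ∧
    N₀.trValue y₀ 6 = 6 ∧ N₀.trPeakCost y₀ 6 = 4 ∧
    N₀.trValue y₀' 6 = 6 ∧ N₀.trPeakCost y₀' 6 = 6 ∧
    N₀.trPeakCost y₀ 6 ≠ N₀.trPeakCost y₀' 6 :=
  ⟨isDecomposition_y₀, isDecomposition_y₀', staticOf_y₀, staticOf_y₀', trValue_y₀, trPeakCost_y₀,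
    trValue_y₀', trPeakCost_y₀', by rw [trPeakCost_y₀, trPeakCost_y₀']; norm_num⟩
end

section
/- For every natural number k ≥ 1, consider the network with nodes V = {s, v, t} ∪ {w_i^j : i ∈ [k], j ∈ [k−1]} (so n = k(k−1)+3 nodes) and arcs A = {(s,v)} ∪ {(v, w_i^1), (w_i^{k−1}, t) : i ∈ [k]} ∪ {(w_i^{j−1}, w_i^j) : i ∈ [k], 2 ≤ j ≤ k−1}, where all capacities and transit times equal 1, the cost of arc (w_i^{i−1}, w_i^i) equals 1 for each i ∈ [k] (with the convention w_i^0 = v and w_i^k = t) and all other costs are 0, with time horizon T = k+2 and demand D = 1. Then every integral temporally repeated flow of value 1 with time horizon T has peak cost exactly 1, while there exists a fractional temporally repeated flow of value 1 with time horizon T whose peak cost equals 1/k. Hence the peak cost of an optimal integral solution is, in the worst case, at least a factor k ∈ Ω(√n) larger than the optimal fractional peak cost. -/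
open MeasureTheory

open Network

/-- Node type for the network of Lemma 2.11: `Sum.inl 0 = s`, `Sum.inl 1 = v`,
`Sum.inl 2 = t` and `Sum.inr (i, j) = wᵢʲ`. -/
abbrev V₂ : Type := Fin 3 ⊕ ℕ × ℕ

/-- The node `wᵢʲ` (with the convention `wᵢ⁰ = v` and `wᵢᵏ = t`). -/
def wNode (k i j : ℕ) : V₂ :=
  if j = 0 then Sum.inl 1 else if j = k then Sum.inl 2 else Sum.inr (i, j)

/-- The network of Lemma 2.11 for a parameter `k`: node `v` is joined to `t` by `k`
internally disjoint paths of length `k` each; the arc `none` is `(s, v)` and the arc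
`some (i, j)` goes from `wᵢʲ` to `wᵢʲ⁺¹`.  All capacities and transit times are `1`;
the `(i+1)`-st arc of the `(i+1)`-st `v`-`t` path has cost `1`, all other costs are `0`. -/
def N₂ (k : ℕ) : Network V₂ (Option (Fin k × Fin k)) where
  tail := fun e => match e with
    | none => Sum.inl 0
    | some (i, j) => wNode k i j
  head := fun e => match e with
    | none => Sum.inl 1
    | some (i, j) => wNode k i (j + 1)
  u := fun _ => 1
  τ := fun _ => 1
  c := fun e => match e with
    | none => 0
    | some (i, j) => if (j : ℕ) = (i : ℕ) then 1 else 0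
  s := Sum.inl 0
  t := Sum.inl 2

/-!
Every simple `s`-`t` path of `N₂ k` is one of the `k` paths `s, v, wᵢ¹, …, wᵢᵏ⁻¹, t`, of
transit time `k + 1`, so with horizon `k + 2` the flow `yᵢ` of path `i` is sent during one unit
of time and the value is `∑ yᵢ`. The costly arc of path `i` is entered at time `i + 1`, so it is
busy exactly during the window `[i + 1, i + 2)`. These windows are pairwise disjoint, hence the
cost at time `θ` is `∑ yᵢ · |[i + 1, i + 2) ∩ (θ - 1, θ]| ≤ max yᵢ`, with equality at
`θ = i + 2` for a maximal `yᵢ`. The peak cost is therefore `max yᵢ`: an integral flow of value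
`1` uses one path with rate `1`, whereas spreading the flow uniformly gives `1 / k`.
-/

open Set Function

namespace Network

variable {V A : Type} [DecidableEq A] (N : Network V A)

theorem prefixTime_add_suffixTime (p : List A) (a : A) :
    N.prefixTime p a + N.suffixTime p a = N.pathTime p := by
  rw [prefixTime, suffixTime, pathTime, ← List.sum_append, ← List.map_append,
    List.takeWhile_append_dropWhile]

theorem prefixTime_append_cons {l₁ l₂ : List A} {a : A} (ha : a ∉ l₁) :
    N.prefixTime (l₁ ++ a :: l₂) a = (l₁.map N.τ).sum := by
  rw [prefixTime,
    List.takeWhile_append_of_pos fun b hb => decide_eq_true (ne_of_mem_of_not_mem hb ha),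
    List.takeWhile_cons_of_neg (by simp), List.append_nil]

theorem prefixTime_getElem {p : List A} (hp : p.Nodup) {n : ℕ} (hn : n < p.length) :
    N.prefixTime p p[n] = N.pathTime (p.take n) := by
  have hsplit : p.take n ++ p[n] :: p.drop (n + 1) = p := by
    rw [← List.drop_eq_getElem_cons hn, List.take_append_drop]
  rw [← hsplit] at hp
  calc N.prefixTime p p[n] = N.prefixTime (p.take n ++ p[n] :: p.drop (n + 1)) p[n] := by
        rw [hsplit]
    _ = _ := N.prefixTime_append_cons
        fun h => (List.nodup_append.mp hp).2.2 _ h _ List.mem_cons_self rfl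

end Network

theorem Network.one_le_of_isIntegral {A : Type} {y : List A → ℝ} (hy : IsIntegral y)
    {p : List A} (hp : y p ≠ 0) : 1 ≤ y p := by
  obtain ⟨n, hn⟩ := hy p
  rw [hn] at hp ⊢
  exact_mod_cast Nat.one_le_iff_ne_zero.mpr (by exact_mod_cast hp)

theorem finsum_mem_eq_sum_indicator {α ι M : Type*} [Fintype ι] [AddCommMonoid M]
    {f : ι → α} (hf : Injective f) {g : α → M}
    (hg : support g ⊆ range f) (S : Set α) :
    ∑ᶠ p ∈ S, g p = ∑ i, S.indicator g (f i) := by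
  classical
  rw [finsum_mem_def, finsum_eq_sum_of_support_subset (s := Finset.univ.image f),
    Finset.sum_image fun _ _ _ _ h => hf h]
  intro p hp
  obtain ⟨i, rfl⟩ := hg (indicator_apply_ne_zero.mp hp).2
  simp

theorem csSup_image_eq_of_forall_le_of_exists_le {α β : Type*}
    [ConditionallyCompleteLinearOrder β] {S : Set α} {g : α → β} {M : β}
    (hle : ∀ x ∈ S, g x ≤ M) (hge : ∃ x ∈ S, M ≤ g x) : sSup (g '' S) = M := by
  obtain ⟨x, hx, hMx⟩ := hge
  exact IsGreatest.csSup_eq ⟨⟨x, hx, le_antisymm (hle x hx) hMx⟩,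
    forall_mem_image.mpr hle⟩

theorem intervalIntegral_indicator_one {s : Set ℝ} (hs : MeasurableSet s) {a b : ℝ}
    (hab : a ≤ b) : ∫ x in a..b, s.indicator 1 x = volume.real (s ∩ Ioc a b) := by
  rw [intervalIntegral.integral_of_le hab, integral_indicator_one hs,
    measureReal_restrict_apply hs]

theorem Real.volume_real_Ioc_sub_one (θ : ℝ) : volume.real (Ioc (θ - 1) θ) = 1 := by
  rw [Real.volume_real_Ioc_of_le (by linarith)]
  ring

theorem List.drop_finRange_eq_cons {k : ℕ} (j : Fin k) :
    (List.finRange k).drop j = j :: (List.finRange k).drop (j + 1) := by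
  rw [List.drop_eq_getElem_cons (by simp), List.getElem_finRange]; rfl

theorem wNode_ne_s (k i j : ℕ) : wNode k i j ≠ Sum.inl 0 := by
  unfold wNode; split_ifs <;> simp

theorem wNode_eq_v_iff {k i j : ℕ} : wNode k i j = Sum.inl 1 ↔ j = 0 := by
  unfold wNode; split_ifs <;> simp_all

theorem wNode_eq_t_iff {k : ℕ} (hk : k ≠ 0) {i j : ℕ} : wNode k i j = Sum.inl 2 ↔ j = k := by
  unfold wNode; split_ifs <;> simp <;> omega

theorem wNode_succ_eq_wNode_iff {k i i' j j' : ℕ} (hj' : j' < k) :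
    wNode k i (j + 1) = wNode k i' j' ↔ i = i' ∧ j + 1 = j' := by
  unfold wNode; split_ifs <;> simp_all; omega

theorem wNode_succ_injOn (k i : ℕ) : InjOn (fun j => wNode k i (j + 1)) (Iio k) := by
  intro a ha b hb hab
  simp only [mem_Iio] at ha hb
  simp only [wNode] at hab
  split_ifs at hab <;> simp_all; omega

namespace N₂

def path (k : ℕ) (i : Fin k) : List (Option (Fin k × Fin k)) :=
  none :: (List.finRange k).map fun j => some (i, j)

variable {k : ℕ}

theorem tail_eq_s_iff {a : Option (Fin k × Fin k)} : (N₂ k).tail a = (N₂ k).s ↔ a = none := by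
  rcases a with _ | ⟨i, j⟩
  · simp [N₂]
  · simpa [N₂] using wNode_ne_s k i j

theorem head_none_eq_tail_iff {b : Option (Fin k × Fin k)} :
    (N₂ k).head none = (N₂ k).tail b ↔ ∃ i j, b = some (i, j) ∧ (j : ℕ) = 0 := by
  rcases b with _ | ⟨i, j⟩
  · simp [N₂]
  · simp only [N₂]
    rw [eq_comm, wNode_eq_v_iff]
    simp

theorem head_some_eq_tail_iff {i j : Fin k} {b : Option (Fin k × Fin k)} :
    (N₂ k).head (some (i, j)) = (N₂ k).tail b ↔ ∃ j', b = some (i, j') ∧ (j' : ℕ) = j + 1 := by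
  rcases b with _ | ⟨i', j'⟩
  · simpa [N₂] using wNode_ne_s k i (j + 1)
  · simp only [N₂, wNode_succ_eq_wNode_iff j'.isLt, Fin.val_inj, Option.some.injEq,
      Prod.mk.injEq]
    constructor
    · rintro ⟨rfl, h⟩; exact ⟨j', ⟨rfl, rfl⟩, h.symm⟩
    · rintro ⟨_, ⟨rfl, rfl⟩, h⟩; exact ⟨rfl, h.symm⟩

theorem isChain_some_cons_ending_at_t_iff {i j : Fin k} {q : List (Option (Fin k × Fin k))} :
    (List.IsChain (fun a b => (N₂ k).head a = (N₂ k).tail b) (some (i, j) :: q) ∧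
      ∀ a ∈ (some (i, j) :: q).getLast?, (N₂ k).head a = (N₂ k).t) ↔
      q = ((List.finRange k).drop (j + 1)).map fun j' => some (i, j') := by
  induction q generalizing j with
  | nil =>
    have hj := j.isLt
    simp only [List.isChain_singleton, List.getLast?_singleton, Option.mem_def,
      Option.some.injEq, forall_eq', true_and, N₂, wNode_eq_t_iff (k := k) (by omega)]
    rw [eq_comm (a := []), List.map_eq_nil_iff, List.drop_eq_nil_iff, List.length_finRange]
    omega
  | cons b q ih =>
    rw [List.isChain_cons_cons, List.getLast?_cons_cons, and_assoc, head_some_eq_tail_iff]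
    constructor
    · rintro ⟨⟨j', rfl, hj'⟩, htail⟩
      rw [ih.mp htail, show (j : ℕ) + 1 = j' from hj'.symm, List.drop_finRange_eq_cons,
        List.map_cons]
    · intro h
      have hj : (j : ℕ) + 1 < k := by
        by_contra hjk
        rw [List.drop_eq_nil_of_le (by simpa using hjk)] at h
        simp at h
      rw [show (j : ℕ) + 1 = (⟨j + 1, hj⟩ : Fin k) from rfl, List.drop_finRange_eq_cons,
        List.map_cons, List.cons.injEq] at h
      obtain ⟨rfl, hq⟩ := h
      exact ⟨⟨_, rfl, rfl⟩, ih.mpr hq⟩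

theorem path_eq_cons (i : Fin k) :
    path k i = none :: some (i, ⟨0, i.pos⟩) ::
      ((List.finRange k).drop 1).map fun j => some (i, j) := by
  have h := List.drop_finRange_eq_cons (⟨0, i.pos⟩ : Fin k)
  simp only [List.drop_zero, zero_add] at h
  rw [path]
  nth_rewrite 1 [h]
  rfl

theorem nodup_nodes_path (i : Fin k) : ((N₂ k).nodes (path k i)).Nodup := by
  have hnodes : (N₂ k).nodes (path k i) =
      Sum.inl 0 :: Sum.inl 1 :: (List.finRange k).map fun j : Fin k => wNode k i (j + 1) := by
    simp [Network.nodes, path, N₂]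
  rw [hnodes, List.nodup_cons, List.nodup_cons]
  refine ⟨?_, ?_, (List.nodup_finRange k).map_on fun a _ b _ h =>
    Fin.ext (wNode_succ_injOn k i a.isLt b.isLt h)⟩
  · simpa using fun j => wNode_ne_s _ _ _
  · simp [wNode_eq_v_iff]

theorem isSTPath_iff_mem_range {p : List (Option (Fin k × Fin k))} :
    (N₂ k).IsSTPath p ↔ p ∈ range (path k) := by
  constructor
  · rintro ⟨hne, hchain, hhead, hlast, -⟩
    rcases p with _ | ⟨a, _ | ⟨b, q⟩⟩
    · exact absurd rfl hne
    · obtain rfl := tail_eq_s_iff.mp (hhead a rfl)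
      simp [N₂] at hlast
    · obtain rfl := tail_eq_s_iff.mp (hhead a rfl)
      obtain ⟨hab, hchain⟩ := List.isChain_cons_cons.mp hchain
      obtain ⟨i, j, rfl, hj⟩ := head_none_eq_tail_iff.mp hab
      obtain rfl : j = ⟨0, i.pos⟩ := Fin.ext hj
      refine ⟨i, ?_⟩
      rw [path_eq_cons, isChain_some_cons_ending_at_t_iff.mp
        ⟨hchain, fun x hx => hlast x (by rwa [List.getLast?_cons_cons])⟩]
  · rintro ⟨i, rfl⟩
    obtain ⟨hchain, hlast⟩ := (isChain_some_cons_ending_at_t_iff (j := ⟨0, i.pos⟩)).mpr rfl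
    refine ⟨List.cons_ne_nil _ _, ?_, by simp [path, N₂], ?_, nodup_nodes_path i⟩
    · rw [path_eq_cons]
      exact List.isChain_cons_cons.mpr ⟨head_none_eq_tail_iff.mpr ⟨i, _, rfl, rfl⟩, hchain⟩
    · rw [path_eq_cons, List.getLast?_cons_cons]
      exact hlast

theorem path_injective : Injective (path k) := by
  intro i i' h
  simp only [path_eq_cons, List.cons.injEq, Option.some.injEq, Prod.mk.injEq] at h
  exact h.2.1.1

theorem some_mem_path_iff {i i' j : Fin k} : some (i', j) ∈ path k i ↔ i' = i := by
  simp [path, eq_comm]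

theorem nodup_path (i : Fin k) : (path k i).Nodup :=
  List.nodup_cons.mpr ⟨by simp, (List.nodup_finRange k).map fun a b h => by simpa using h⟩

theorem length_path (i : Fin k) : (path k i).length = k + 1 := by simp [path]

theorem pathTime_eq_length (p : List (Option (Fin k × Fin k))) :
    (N₂ k).pathTime p = p.length := by
  simp [Network.pathTime, N₂]

theorem prefixTime_path (i j : Fin k) :
    (N₂ k).prefixTime (path k i) (some (i, j)) = j + 1 := by
  have hn : (j : ℕ) + 1 < (path k i).length := by simp [length_path]
  have hget : (path k i)[(j : ℕ) + 1] = some (i, j) := by simp [path]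
  rw [← hget, (N₂ k).prefixTime_getElem (nodup_path i) hn, pathTime_eq_length,
    List.length_take, length_path]
  omega

theorem suffixTime_path (i j : Fin k) :
    (N₂ k).suffixTime (path k i) (some (i, j)) = k - j := by
  have h := (N₂ k).prefixTime_add_suffixTime (path k i) (some (i, j))
  rw [prefixTime_path, pathTime_eq_length, length_path] at h
  omega

def costWindow (i : ℕ) : Set ℝ := Ico (i + 1) (i + 2)

theorem measurableSet_costWindow (i : ℕ) : MeasurableSet (costWindow i) := measurableSet_Ico

theorem pairwise_disjoint_costWindow : Pairwise (Disjoint on costWindow) := by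
  intro i j hij
  rw [onFun, costWindow, costWindow, Ico_disjoint_Ico, min_le_iff, le_max_iff,
    le_max_iff]
  rcases Nat.lt_or_gt_of_ne hij with h | h
  · have : (i : ℝ) + 1 ≤ j := by exact_mod_cast h
    left; right; linarith
  · have : (j : ℝ) + 1 ≤ i := by exact_mod_cast h
    right; left; linarith

theorem sum_measureReal_costWindow_inter_le (θ : ℝ) :
    ∑ i : Fin k, volume.real (costWindow i ∩ Ioc (θ - 1) θ) ≤ 1 := by
  rw [← measureReal_iUnion_fintype
    ((pairwise_disjoint_costWindow.comp_of_injective Fin.val_injective).mono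
      fun i j h => h.mono inter_subset_left inter_subset_left)
    (fun i => (measurableSet_costWindow i).inter measurableSet_Ioc)
    fun i => measure_inter_lt_top_of_right_ne_top measure_Ioc_lt_top.ne |>.ne]
  exact (measureReal_mono (iUnion_subset fun i => inter_subset_right)
    measure_Ioc_lt_top.ne).trans (Real.volume_real_Ioc_sub_one θ).le

theorem one_le_measureReal_costWindow_inter (i : ℕ) :
    1 ≤ volume.real (costWindow i ∩ Ioc ((i : ℝ) + 2 - 1) (i + 2)) := by
  have hsub : Ioo ((i : ℝ) + 1) (i + 2) ⊆ costWindow i ∩ Ioc ((i : ℝ) + 2 - 1) (i + 2) :=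
    fun x hx => ⟨⟨hx.1.le, hx.2⟩, by linarith [hx.1], hx.2.le⟩
  calc (1 : ℝ) = volume.real (Ioo ((i : ℝ) + 1) (i + 2)) := by
        rw [Real.volume_real_Ioo_of_le (by linarith)]; ring
    _ ≤ _ := measureReal_mono hsub
        (measure_inter_lt_top_of_right_ne_top measure_Ioc_lt_top.ne).ne

section

variable {y : List (Option (Fin k × Fin k)) → ℝ}

theorem trRate_some_self (hy : support y ⊆ range (path k)) (i : Fin k) (θ : ℝ) :
    (N₂ k).trRate y ((k + 2 : ℕ) : ℝ) (some (i, i)) θ =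
      y (path k i) * (costWindow i).indicator 1 θ := by
  rw [Network.trRate, finsum_mem_eq_sum_indicator path_injective hy, Finset.sum_eq_single i]
  · have hwindow : (((k + 1 : ℕ) : ℝ) ≤ ((k + 2 : ℕ) : ℝ) ∧ (((i : ℕ) + 1 : ℕ) : ℝ) ≤ θ ∧
        ((k - i : ℕ) : ℝ) < ((k + 2 : ℕ) : ℝ) - θ) ↔ θ ∈ costWindow i := by
      rw [costWindow, mem_Ico, Nat.cast_sub i.isLt.le]
      push_cast
      constructor
      · rintro ⟨-, h₁, h₂⟩
        exact ⟨h₁, by linarith⟩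
      · rintro ⟨h₁, h₂⟩
        exact ⟨by linarith, h₁, by linarith⟩
    by_cases hθ : θ ∈ costWindow i
    · rw [indicator_of_mem hθ, indicator_of_mem, Pi.one_apply, mul_one]
      simpa [isSTPath_iff_mem_range, pathTime_eq_length, length_path, some_mem_path_iff,
        prefixTime_path, suffixTime_path] using hwindow.mpr hθ
    · rw [indicator_of_notMem hθ, indicator_of_notMem, mul_zero]
      simpa [isSTPath_iff_mem_range, pathTime_eq_length, length_path, some_mem_path_iff,
        prefixTime_path, suffixTime_path] using mt hwindow.mp hθ
  · intro i' _ hi'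
    exact indicator_of_notMem (fun h => hi' (some_mem_path_iff.mp h.2.2.1).symm) _
  · simp

theorem trValue_eq_sum (hy : support y ⊆ range (path k)) :
    (N₂ k).trValue y ((k + 2 : ℕ) : ℝ) = ∑ i, y (path k i) := by
  rw [Network.trValue, finsum_mem_eq_sum_indicator path_injective
    ((support_mul_subset_left _ _).trans hy)]
  refine Finset.sum_congr rfl fun i _ => ?_
  rw [indicator_of_mem, pathTime_eq_length, length_path]
  · push_cast; ring
  · refine ⟨isSTPath_iff_mem_range.mpr (mem_range_self i), ?_⟩
    rw [pathTime_eq_length, length_path]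
    push_cast; linarith

theorem costAt_trRate (hy : support y ⊆ range (path k)) (θ : ℝ) :
    (N₂ k).costAt ((N₂ k).trRate y ((k + 2 : ℕ) : ℝ)) θ =
      ∑ i, y (path k i) * volume.real (costWindow i ∩ Ioc (θ - 1) θ) := by
  have hcost : ∀ i j : Fin k, ((N₂ k).c (some (i, j)) : ℝ) = if i = j then 1 else 0 := by
    intro i j
    simp [N₂, ← Fin.val_inj, eq_comm]
  rw [Network.costAt, Fintype.sum_option, Fintype.sum_prod_type]
  simp only [hcost, ite_mul, one_mul, zero_mul, Finset.sum_ite_eq, Finset.mem_univ, if_true]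
  have hnone : ((N₂ k).c none : ℝ) = 0 := by simp [N₂]
  have hτ : ∀ a, ((N₂ k).τ a : ℝ) = 1 := by simp [N₂]
  rw [hnone, zero_mul, zero_add]
  refine Finset.sum_congr rfl fun i _ => ?_
  rw [hτ, intervalIntegral.integral_congr fun ξ _ => trRate_some_self hy i ξ,
    intervalIntegral.integral_const_mul,
    intervalIntegral_indicator_one (measurableSet_costWindow i) (by linarith)]

theorem costAt_trRate_le (hy : support y ⊆ range (path k)) {c : ℝ} (hc₀ : 0 ≤ c)
    (hc : ∀ i, y (path k i) ≤ c) (θ : ℝ) :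
    (N₂ k).costAt ((N₂ k).trRate y ((k + 2 : ℕ) : ℝ)) θ ≤ c := by
  rw [costAt_trRate hy]
  calc ∑ i, y (path k i) * volume.real (costWindow i ∩ Ioc (θ - 1) θ)
      ≤ ∑ i : Fin k, c * volume.real (costWindow i ∩ Ioc (θ - 1) θ) :=
        Finset.sum_le_sum fun i _ => mul_le_mul_of_nonneg_right (hc i) measureReal_nonneg
    _ = c * ∑ i : Fin k, volume.real (costWindow i ∩ Ioc (θ - 1) θ) :=
        (Finset.mul_sum ..).symm
    _ ≤ c * 1 := mul_le_mul_of_nonneg_left (sum_measureReal_costWindow_inter_le θ) hc₀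
    _ = c := mul_one c

theorem le_costAt_trRate (hy : support y ⊆ range (path k)) (hy₀ : ∀ p, 0 ≤ y p) (i : Fin k) :
    y (path k i) ≤ (N₂ k).costAt ((N₂ k).trRate y ((k + 2 : ℕ) : ℝ)) ((i : ℝ) + 2) := by
  rw [costAt_trRate hy]
  calc y (path k i)
      ≤ y (path k i) * volume.real (costWindow i ∩ Ioc ((i : ℝ) + 2 - 1) (i + 2)) :=
        le_mul_of_one_le_right (hy₀ _) (one_le_measureReal_costWindow_inter i)
    _ ≤ _ := Finset.single_le_sum (f := fun j : Fin k =>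
          y (path k j) * volume.real (costWindow j ∩ Ioc ((i : ℝ) + 2 - 1) (i + 2)))
        (fun j _ => mul_nonneg (hy₀ _) measureReal_nonneg) (Finset.mem_univ i)

theorem trPeakCost_eq (hy : support y ⊆ range (path k)) (hy₀ : ∀ p, 0 ≤ y p) {c : ℝ}
    (hc : ∀ i, y (path k i) ≤ c) (hattained : ∃ i, c ≤ y (path k i)) :
    (N₂ k).trPeakCost y ((k + 2 : ℕ) : ℝ) = c := by
  obtain ⟨i, hi⟩ := hattained
  refine csSup_image_eq_of_forall_le_of_exists_le
    (fun θ _ => costAt_trRate_le hy ((hy₀ _).trans (hc i)) hc θ)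
    ⟨(i : ℝ) + 2, ⟨by positivity, ?_⟩, hi.trans (le_costAt_trRate hy hy₀ i)⟩
  have : (i : ℝ) < k := by exact_mod_cast i.isLt
  push_cast
  linarith

end

noncomputable def uniformFlow (k : ℕ) : List (Option (Fin k × Fin k)) → ℝ :=
  (range (path k)).indicator fun _ => 1 / k

theorem uniformFlow_path (i : Fin k) : uniformFlow k (path k i) = 1 / k :=
  indicator_of_mem (mem_range_self i) _

theorem uniformFlow_nonneg (p : List (Option (Fin k × Fin k))) : 0 ≤ uniformFlow k p :=
  indicator_nonneg (fun _ _ => by positivity) p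

theorem support_uniformFlow_subset : support (uniformFlow k) ⊆ range (path k) :=
  fun _ hp => (indicator_apply_ne_zero.mp hp).1

theorem isDecomposition_uniformFlow : (N₂ k).IsDecomposition (uniformFlow k) := by
  refine ⟨uniformFlow_nonneg, fun p hp => isSTPath_iff_mem_range.mpr
    (support_uniformFlow_subset hp), (finite_range (path k)).subset support_uniformFlow_subset,
    fun a => ?_⟩
  rw [Network.staticOf, finsum_mem_eq_sum_indicator path_injective support_uniformFlow_subset]
  calc ∑ i, {p | a ∈ p}.indicator (uniformFlow k) (path k i) ≤ ∑ _i : Fin k, (1 / k : ℝ) :=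
        Finset.sum_le_sum fun i _ => (indicator_le_self' (fun p _ => uniformFlow_nonneg p) _).trans
          (uniformFlow_path i).le
    _ ≤ ((N₂ k).u a : ℝ) := by
      simp only [Finset.sum_const, Finset.card_univ, Fintype.card_fin, nsmul_eq_mul, mul_one_div]
      simpa [N₂] using div_self_le_one (k : ℝ)

end N₂

/-- for every `k ≥ 1`, in the network `N₂ k` (which has
`n = k(k-1) + 3` nodes) with time horizon `T = k + 2` and demand `D = 1`, every
integral temporally repeated flow of value `1` has peak cost exactly `1`, while some
fractional temporally repeated flow of value `1` has peak cost `1/k`.  Hence the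
integrality gap is at least `k ∈ Ω(√n)`. -/
theorem stmt2 (k : ℕ) (hk : 1 ≤ k) :
    (∀ y : List (Option (Fin k × Fin k)) → ℝ,
      (N₂ k).IsDecomposition y → IsIntegral y →
      (N₂ k).trValue y ((k + 2 : ℕ) : ℝ) = 1 →
      (N₂ k).trPeakCost y ((k + 2 : ℕ) : ℝ) = 1) ∧
    (∃ y : List (Option (Fin k × Fin k)) → ℝ,
      (N₂ k).IsDecomposition y ∧
      (N₂ k).trValue y ((k + 2 : ℕ) : ℝ) = 1 ∧
      (N₂ k).trPeakCost y ((k + 2 : ℕ) : ℝ) = 1 / k) := by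
  refine ⟨fun y hdec hint hval => ?_, N₂.uniformFlow k, N₂.isDecomposition_uniformFlow, ?_, ?_⟩
  · have hy : support y ⊆ range (N₂.path k) :=
      fun p hp => N₂.isSTPath_iff_mem_range.mp (hdec.2.1 p hp)
    rw [N₂.trValue_eq_sum hy] at hval
    obtain ⟨i, -, hi⟩ := Finset.exists_ne_zero_of_sum_ne_zero (hval.trans_ne one_ne_zero)
    exact N₂.trPeakCost_eq hy hdec.1
      (fun j => hval ▸ Finset.single_le_sum (fun j _ => hdec.1 _) (Finset.mem_univ j))
      ⟨i, one_le_of_isIntegral hint hi⟩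
  · rw [N₂.trValue_eq_sum N₂.support_uniformFlow_subset]
    simp only [N₂.uniformFlow_path, Finset.sum_const, Finset.card_univ, Fintype.card_fin,
      nsmul_eq_mul]
    field_simp
  · exact N₂.trPeakCost_eq N₂.support_uniformFlow_subset N₂.uniformFlow_nonneg
      (fun i => (N₂.uniformFlow_path i).le) ⟨⟨0, hk⟩, (N₂.uniformFlow_path _).ge⟩
end

section
/- Let x_1, …, x_n be positive integers and L ∈ ℕ. Set T = 2·max_{i ∈ [n]} x_i and consider the network consisting of nodes s and t joined by n parallel arcs a_1, …, a_n, where each arc a_i has capacity 1, cost 1, and transit time τ(a_i) = T − x_i. Then there exists an integral temporally repeated flow with time horizon T of value at least L and peak cost at most L if and only if there exists a subset S ⊆ [n] with Σ_{i ∈ S} x_i = L. Consequently, integral minimum-peak-cost temporally repeated flow is at least weakly NP-hard, even on series-parallel graphs with unit costs and a short time horizon. -/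
open MeasureTheory

open Network

/-- The network of Theorem 4.4: `n` parallel arcs from `s = 0` to `t = 1`, where arc
`i` has capacity `1`, cost `1` and transit time `T − xᵢ` for `T = 2·max_i xᵢ`. -/
def N₆ (n : ℕ) (x : Fin n → ℕ) : Network (Fin 2) (Fin n) where
  tail := fun _ => 0
  head := fun _ => 1
  u := fun _ => 1
  c := fun _ => 1
  τ := fun i => 2 * Finset.univ.sup x - x i
  s := 0
  t := 1

/-! The only simple `s`-`t` paths of `N₆ n x` are the single arcs, and capacity `1` together with
integrality forces an integral decomposition to send exactly one unit along each arc of some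
`S ⊆ [n]`. Arc `i` then carries flow during `[0, xᵢ)`, so the TR flow has value
`∑_{i ∈ S} (T - τᵢ) = ∑_{i ∈ S} xᵢ`. Its cost at time `θ` counts the flow in transit, at most `xᵢ`
per arc, and at `θ = max xᵢ` every arc of `S` holds all of it, since `θ - τᵢ = xᵢ - max xᵢ ≤ 0`.
Hence the peak cost is also `∑_{i ∈ S} xᵢ`, and both requirements together say that it equals `L`. -/

open Set

namespace Network

variable {V A : Type}

lemma pathTime_singleton (N : Network V A) (a : A) : N.pathTime [a] = N.τ a := by
  simp [pathTime]

lemma prefixTime_singleton [DecidableEq A] (N : Network V A) (a : A) :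
    N.prefixTime [a] a = 0 := by
  simp [prefixTime]

lemma suffixTime_singleton [DecidableEq A] (N : Network V A) (a : A) :
    N.suffixTime [a] a = N.τ a := by
  simp [suffixTime]

lemma le_staticOf [DecidableEq A] (N : Network V A) {y : List A → ℝ} (hy : ∀ p, 0 ≤ y p)
    (hfin : (Function.support y).Finite) {p : List A} {a : A} (ha : a ∈ p) :
    y p ≤ N.staticOf y a := by
  have hfin' : ({q : List A | a ∈ q} ∩ Function.support y).Finite := hfin.inter_of_right _
  unfold staticOf
  rw [finsum_mem_eq_sum _ hfin']
  by_cases hp : y p = 0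
  · exact hp ▸ Finset.sum_nonneg fun q _ => hy q
  · exact Finset.single_le_sum (fun q _ => hy q) (by simpa [hfin'.mem_toFinset] using ⟨ha, hp⟩)

end Network

noncomputable def unitFlow {A : Type} (S : Finset A) : List A → ℝ :=
  ((fun i => [i]) '' (S : Set A)).indicator 1

section unitFlow

variable {A : Type}

lemma unitFlow_singleton [DecidableEq A] (S : Finset A) (i : A) :
    unitFlow S [i] = if i ∈ S then 1 else 0 := by
  classical
  rw [unitFlow, indicator_apply]
  simp

lemma exists_eq_singleton_of_unitFlow_ne_zero {S : Finset A} {p : List A}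
    (h : unitFlow S p ≠ 0) : ∃ i ∈ S, p = [i] := by
  obtain ⟨i, hi, rfl⟩ := (indicator_apply_ne_zero.1 h).1
  exact ⟨i, hi, rfl⟩

lemma finsum_mem_unitFlow_mul [DecidableEq A] (S : Finset A) (P : Set (List A))
    [DecidablePred (· ∈ P)] (g : List A → ℝ) :
    ∑ᶠ p ∈ P, unitFlow S p * g p = ∑ i ∈ S with [i] ∈ P, g [i] := by
  rw [finsum_mem_eq_sum_of_subset _ (t := (S.filter ([·] ∈ P)).image (fun i => [i]))]
  · rw [Finset.sum_image fun i _ j _ h => List.singleton_inj.1 h]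
    refine Finset.sum_congr rfl fun i hi => ?_
    rw [unitFlow_singleton, if_pos (Finset.mem_filter.1 hi).1, one_mul]
  · rintro p ⟨hp, hne⟩
    obtain ⟨i, hi, rfl⟩ := exists_eq_singleton_of_unitFlow_ne_zero (left_ne_zero_of_mul hne)
    exact Finset.mem_coe.2 (Finset.mem_image.2 ⟨i, Finset.mem_filter.2 ⟨hi, hp⟩, rfl⟩)
  · intro p hp
    obtain ⟨i, hi, rfl⟩ := Finset.mem_image.1 hp
    exact (Finset.mem_filter.1 hi).2

lemma finsum_mem_unitFlow [DecidableEq A] (S : Finset A) (P : Set (List A))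
    [DecidablePred (· ∈ P)] :
    ∑ᶠ p ∈ P, unitFlow S p = ∑ i ∈ S, if [i] ∈ P then 1 else 0 := by
  simpa [Finset.sum_filter] using finsum_mem_unitFlow_mul S P 1

lemma isIntegral_unitFlow (S : Finset A) : IsIntegral (unitFlow S) := by
  intro p
  by_cases hp : p ∈ (fun i => [i]) '' (S : Set A)
  · exact ⟨1, by simp [unitFlow, hp]⟩
  · exact ⟨0, by simp [unitFlow, hp]⟩

end unitFlow

section parallelArcs

variable {n : ℕ} {x : Fin n → ℕ}

lemma isSTPath_N₆_iff {p : List (Fin n)} : (N₆ n x).IsSTPath p ↔ ∃ i, p = [i] := by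
  constructor
  · rintro ⟨hne, hchain, -, -, -⟩
    match p, hchain with
    | [], _ => exact absurd rfl hne
    | [i], _ => exact ⟨i, rfl⟩
    | _ :: _ :: _, hchain => exact absurd (List.isChain_cons_cons.1 hchain).1 (by simp [N₆])
  · rintro ⟨i, rfl⟩
    refine ⟨List.cons_ne_nil _ _, List.isChain_singleton _, ?_, ?_, ?_⟩ <;>
      simp [N₆, Network.nodes]

lemma le_two_mul_sup (i : Fin n) : x i ≤ 2 * Finset.univ.sup x :=
  (Finset.le_sup (Finset.mem_univ i)).trans (Nat.le_mul_of_pos_left _ two_pos)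

lemma τ_N₆_cast (i : Fin n) :
    ((N₆ n x).τ i : ℝ) = ((2 * Finset.univ.sup x : ℕ) : ℝ) - x i := by
  simp only [N₆, Nat.cast_sub (le_two_mul_sup i)]

lemma isDecomposition_unitFlow (S : Finset (Fin n)) : (N₆ n x).IsDecomposition (unitFlow S) := by
  refine ⟨fun p => indicator_nonneg (fun _ _ => zero_le_one) p, fun p hp => ?_,
    ((S.finite_toSet.image _).subset support_indicator_subset), fun a => ?_⟩
  · obtain ⟨i, -, rfl⟩ := exists_eq_singleton_of_unitFlow_ne_zero hp
    exact isSTPath_N₆_iff.2 ⟨i, rfl⟩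
  · rw [Network.staticOf, finsum_mem_unitFlow]
    simp only [mem_ofPred_eq, List.mem_singleton, Finset.sum_ite_eq]
    split_ifs <;> simp [N₆]

lemma trValue_unitFlow (S : Finset (Fin n)) :
    (N₆ n x).trValue (unitFlow S) ((2 * Finset.univ.sup x : ℕ) : ℝ) = ∑ i ∈ S, (x i : ℝ) := by
  classical
  have hpath : ∀ i, [i] ∈ {p | (N₆ n x).IsSTPath p ∧
      ((N₆ n x).pathTime p : ℝ) ≤ ((2 * Finset.univ.sup x : ℕ) : ℝ)} := fun i =>
    ⟨isSTPath_N₆_iff.2 ⟨i, rfl⟩, by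
      rw [Network.pathTime_singleton, τ_N₆_cast]; linarith [(x i).cast_nonneg (α := ℝ)]⟩
  rw [Network.trValue, finsum_mem_unitFlow_mul, Finset.filter_true_of_mem fun i _ => hpath i]
  refine Finset.sum_congr rfl fun i _ => ?_
  rw [Network.pathTime_singleton, τ_N₆_cast]
  ring

lemma trRate_unitFlow (S : Finset (Fin n)) (a : Fin n) (θ : ℝ) :
    (N₆ n x).trRate (unitFlow S) ((2 * Finset.univ.sup x : ℕ) : ℝ) a θ =
      (if a ∈ S then 1 else 0) * (Ico 0 (x a : ℝ)).indicator 1 θ := by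
  classical
  have hmem : ∀ i, [i] ∈ {p | (N₆ n x).IsSTPath p ∧
      ((N₆ n x).pathTime p : ℝ) ≤ ((2 * Finset.univ.sup x : ℕ) : ℝ) ∧ a ∈ p ∧
      ((N₆ n x).prefixTime p a : ℝ) ≤ θ ∧
      ((N₆ n x).suffixTime p a : ℝ) < ((2 * Finset.univ.sup x : ℕ) : ℝ) - θ} ↔
      a = i ∧ θ ∈ Ico 0 (x a : ℝ) := by
    intro i
    simp only [mem_ofPred_eq, List.mem_singleton, mem_Ico]
    constructor
    · rintro ⟨-, -, rfl, hpre, hsuf⟩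
      rw [Network.prefixTime_singleton, Nat.cast_zero] at hpre
      rw [Network.suffixTime_singleton, τ_N₆_cast] at hsuf
      exact ⟨rfl, hpre, by linarith⟩
    · rintro ⟨rfl, h0, hθ⟩
      refine ⟨isSTPath_N₆_iff.2 ⟨a, rfl⟩, ?_, rfl, ?_, ?_⟩
      · rw [Network.pathTime_singleton, τ_N₆_cast]; linarith
      · rwa [Network.prefixTime_singleton, Nat.cast_zero]
      · rw [Network.suffixTime_singleton, τ_N₆_cast]; linarith
  rw [Network.trRate, finsum_mem_unitFlow]
  simp_rw [hmem, ite_and, Finset.sum_ite_eq]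
  split_ifs <;> simp [indicator_apply, *]

lemma measureReal_Ico_inter_Ioc_le {c : ℝ} (hc : 0 ≤ c) (a b : ℝ) :
    volume.real (Ico 0 c ∩ Ioc a b) ≤ c :=
  calc volume.real (Ico 0 c ∩ Ioc a b) ≤ volume.real (Ico 0 c) :=
        measureReal_mono inter_subset_left measure_Ico_lt_top.ne
    _ = c := by rw [Real.volume_real_Ico_of_le hc, sub_zero]

lemma measureReal_Ico_inter_Ioc_of_le {a b c : ℝ} (hc : 0 ≤ c) (ha : a ≤ 0) (hb : c ≤ b) :
    volume.real (Ico 0 c ∩ Ioc a b) = c := by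
  refine le_antisymm (measureReal_Ico_inter_Ioc_le hc a b) ?_
  have hsub : Ioo 0 c ⊆ Ico 0 c ∩ Ioc a b := fun ξ hξ =>
    ⟨Ioo_subset_Ico_self hξ, ha.trans_lt hξ.1, hξ.2.le.trans hb⟩
  calc c = volume.real (Ioo 0 c) := by rw [Real.volume_real_Ioo_of_le hc, sub_zero]
    _ ≤ _ := measureReal_mono hsub
        ((measure_mono inter_subset_left).trans_lt measure_Ico_lt_top).ne

lemma costAt_unitFlow (S : Finset (Fin n)) (θ : ℝ) :
    (N₆ n x).costAt ((N₆ n x).trRate (unitFlow S) ((2 * Finset.univ.sup x : ℕ) : ℝ)) θ =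
      ∑ i ∈ S, volume.real (Ico 0 (x i : ℝ) ∩ Ioc (θ - (N₆ n x).τ i) θ) := by
  have hint : ∀ i, ∫ ξ in (θ - ((N₆ n x).τ i : ℝ))..θ, (Ico 0 (x i : ℝ)).indicator 1 ξ =
      volume.real (Ico 0 (x i : ℝ) ∩ Ioc (θ - (N₆ n x).τ i) θ) := fun i => by
    rw [intervalIntegral.integral_of_le (sub_le_self θ (Nat.cast_nonneg _)),
      integral_indicator_one measurableSet_Ico, measureReal_restrict_apply measurableSet_Ico]
  simp only [Network.costAt, trRate_unitFlow, intervalIntegral.integral_const_mul, hint]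
  simp [N₆, Finset.sum_ite_mem]

lemma trPeakCost_unitFlow (S : Finset (Fin n)) :
    (N₆ n x).trPeakCost (unitFlow S) ((2 * Finset.univ.sup x : ℕ) : ℝ) = ∑ i ∈ S, (x i : ℝ) := by
  have hbdd : ∀ θ, (N₆ n x).costAt ((N₆ n x).trRate (unitFlow S)
      ((2 * Finset.univ.sup x : ℕ) : ℝ)) θ ≤ ∑ i ∈ S, (x i : ℝ) := fun θ => by
    rw [costAt_unitFlow]
    exact Finset.sum_le_sum fun i _ => measureReal_Ico_inter_Ioc_le (Nat.cast_nonneg _) _ _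
  rcases (Finset.univ.sup x).eq_zero_or_pos with hM | hM
  · have hx : ∀ i, x i = 0 := fun i => Nat.le_zero.1 (hM ▸ Finset.le_sup (Finset.mem_univ i))
    simp [Network.trPeakCost, Network.peakCost, hM, hx]
  · have hxM : ∀ i, (x i : ℝ) ≤ (Finset.univ.sup x : ℕ) := fun i => by
      exact_mod_cast Finset.le_sup (Finset.mem_univ i)
    have hpeak : (N₆ n x).costAt ((N₆ n x).trRate (unitFlow S)
        ((2 * Finset.univ.sup x : ℕ) : ℝ)) (Finset.univ.sup x : ℕ) = ∑ i ∈ S, (x i : ℝ) := by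
      rw [costAt_unitFlow]
      refine Finset.sum_congr rfl fun i _ =>
        measureReal_Ico_inter_Ioc_of_le (Nat.cast_nonneg _) ?_ (hxM i)
      rw [τ_N₆_cast]
      push_cast
      linarith [hxM i]
    refine le_antisymm (Real.sSup_le ?_ (by positivity)) (hpeak ▸ le_csSup ?_ ?_)
    · rintro _ ⟨θ, -, rfl⟩
      exact hbdd θ
    · exact ⟨_, by rintro _ ⟨θ, -, rfl⟩; exact hbdd θ⟩
    · refine ⟨_, ⟨Nat.cast_nonneg _, ?_⟩, rfl⟩
      push_cast
      linarith [(Nat.cast_pos (α := ℝ)).2 hM]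

lemma exists_eq_unitFlow_of_isDecomposition {y : List (Fin n) → ℝ}
    (hy : (N₆ n x).IsDecomposition y) (hint : IsIntegral y) :
    ∃ S : Finset (Fin n), y = unitFlow S := by
  classical
  obtain ⟨hy0, hyST, hyfin, hycap⟩ := hy
  refine ⟨Finset.univ.filter (fun i => y [i] ≠ 0), funext fun p => ?_⟩
  by_cases hp : y p = 0
  · rw [hp, eq_comm]
    by_contra hne
    obtain ⟨i, hi, rfl⟩ := exists_eq_singleton_of_unitFlow_ne_zero hne
    exact (Finset.mem_filter.1 hi).2 hp
  · obtain ⟨i, rfl⟩ := isSTPath_N₆_iff.1 (hyST p hp)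
    rw [unitFlow_singleton, if_pos (by simpa using hp)]
    have hle : y [i] ≤ 1 := ((N₆ n x).le_staticOf hy0 hyfin (List.mem_singleton_self i)).trans
      (by simpa [N₆] using hycap i)
    obtain ⟨m, hm⟩ := hint [i]
    rw [hm] at hp hle ⊢
    norm_cast at hp hle ⊢
    omega

end parallelArcs

theorem stmt6_general (n : ℕ) (x : Fin n → ℕ) (L : ℕ) :
    (∃ y : List (Fin n) → ℝ, (N₆ n x).IsDecomposition y ∧ IsIntegral y ∧
      (L : ℝ) ≤ (N₆ n x).trValue y ((2 * Finset.univ.sup x : ℕ) : ℝ) ∧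
      (N₆ n x).trPeakCost y ((2 * Finset.univ.sup x : ℕ) : ℝ) ≤ (L : ℝ)) ↔
    (∃ S : Finset (Fin n), ∑ i ∈ S, x i = L) := by
  constructor
  · rintro ⟨y, hy, hint, hval, hpeak⟩
    obtain ⟨S, rfl⟩ := exists_eq_unitFlow_of_isDecomposition hy hint
    rw [trValue_unitFlow] at hval
    rw [trPeakCost_unitFlow] at hpeak
    exact ⟨S, by exact_mod_cast le_antisymm hpeak hval⟩
  · rintro ⟨S, rfl⟩
    refine ⟨unitFlow S, isDecomposition_unitFlow S, isIntegral_unitFlow S, ?_, ?_⟩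
    · rw [trValue_unitFlow, Nat.cast_sum]
    · rw [trPeakCost_unitFlow, Nat.cast_sum]

/-- Theorem 4.4: for positive integers `x₁, …, xₙ`, a target `L` and
time horizon `T = 2·max_i xᵢ`, the parallel-arc network `N₆ n x` admits an integral
temporally repeated flow of value at least `L` with peak cost at most `L` if and only
if some subset of the `xᵢ` sums to exactly `L`.  (This is a reduction from Subset Sum,
so integral MPC-TRF is at least weakly NP-hard, even on series-parallel graphs with
unit costs and a short time horizon.) -/
theorem stmt6 (n : ℕ) (x : Fin n → ℕ) (hx : ∀ i, 0 < x i) (L : ℕ) :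
    (∃ y : List (Fin n) → ℝ, (N₆ n x).IsDecomposition y ∧ IsIntegral y ∧
      (L : ℝ) ≤ (N₆ n x).trValue y ((2 * Finset.univ.sup x : ℕ) : ℝ) ∧
      (N₆ n x).trPeakCost y ((2 * Finset.univ.sup x : ℕ) : ℝ) ≤ (L : ℝ)) ↔
    (∃ S : Finset (Fin n), ∑ i ∈ S, x i = L) :=
  stmt6_general n x L
end

section
/- Let G be an acyclic directed graph with distinguished nodes s and t, and let p_1 and p_2 be two simple s-t paths intersecting at the set of nodes I = {v_1, …, v_k}, enumerated in the order in which they occur on p_1. Then the recombined paths q_1 = p_1|_{s,v_1} ∘ p_2|_{v_1,v_2} ∘ ⋯ (alternating segments of p_1 and p_2 between consecutive intersection nodes, ending with the appropriate path's segment from v_k to t) and the analogously defined q_2 starting with p_2|_{s,v_1} are well-defined simple s-t paths. In particular, both p_1 and p_2 traverse the nodes of I in the same order. -/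
open MeasureTheory

namespace Network

variable {V A : Type}

/-- The subpath of `p` from node `v` to node `w` (assuming `v` occurs before `w`
on `p`): the arcs of `p` starting at the first arc whose tail is `v` and stopping
just before the first subsequent arc whose tail is `w`. -/
def segment [DecidableEq V] (N : Network V A) (p : List A) (v w : V) : List A :=
  (p.dropWhile fun a => N.tail a ≠ v).takeWhile fun a => N.tail a ≠ w

/-- Alternating concatenation of segments of `p₁` and `p₂`, switching paths at each
waypoint of the given list, starting at node `cur` on `p₁` if `b = true`
(on `p₂` otherwise) and ending at the sink. -/
def altConcat [DecidableEq V] (N : Network V A) (p₁ p₂ : List A) :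
    List V → V → Bool → List A
  | [], cur, b => N.segment (if b then p₁ else p₂) cur N.t
  | v :: vs, cur, b =>
      N.segment (if b then p₁ else p₂) cur v ++ N.altConcat p₁ p₂ vs v (!b)

/-- `q` and `qh` are the two paths recombined from `p₁` and `p₂`: for the list `vs`
of all common nodes of `p₁` and `p₂`, enumerated in the order of occurrence on `p₁`,
they are obtained by alternately concatenating the segments of `p₁` and `p₂` between
consecutive common nodes (one of them starting with `p₁`'s initial segment, the
other with `p₂`'s). -/
def IsRecombination [DecidableEq V] (N : Network V A) (p₁ p₂ q qh : List A) : Prop :=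
  ∃ vs : List V, vs.Sublist (N.nodes p₁) ∧
    (∀ v, v ∈ vs ↔ v ∈ N.nodes p₁ ∧ v ∈ N.nodes p₂) ∧
    ((q = N.altConcat p₁ p₂ vs N.s true ∧ qh = N.altConcat p₁ p₂ vs N.s false) ∨
     (q = N.altConcat p₁ p₂ vs N.s false ∧ qh = N.altConcat p₁ p₂ vs N.s true))

end Network

/-!
Acyclicity forces `p₁` and `p₂` to meet their common nodes in the same order: if `a` precedes
`b` on `p₁` while `b` precedes `a` on `p₂`, the piece of `p₁` from `a` to `b` followed by the
piece of `p₂` from `b` back to `a` is a closed walk. Hence from every common node `v_i` on, both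
paths see the same remaining common nodes `v_{i+1}, …, t`. The recombined path from `v_i` is
the segment from `v_i` to `v_{i+1}` followed by the recombined path from `v_{i+1}`, which lies
on the parts of `p₁` and `p₂` beyond `v_{i+1}`; the segment meets no common node other than
`v_i`, so no node is repeated.
-/

namespace List

variable {α : Type*}

theorem Sublist.eq_filter_mem [DecidableEq α] {l₁ l : List α} (h : l₁ <+ l) (hl : l.Nodup) :
    l₁ = l.filter (· ∈ l₁) := by
  induction h with
  | slnil => rfl
  | @cons l₁ l₂ a h ih =>
    have ha : a ∉ l₁ := fun ha => (nodup_cons.1 hl).1 (h.subset ha)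
    rw [filter_cons_of_neg (by simpa using ha)]
    exact ih (nodup_cons.1 hl).2
  | @cons_cons l₁ l₂ a h ih =>
    have hfilter : l₂.filter (· ∈ a :: l₁) = l₂.filter (· ∈ l₁) :=
      filter_congr fun x hx => by
        simp [show x ≠ a from fun hxa => (nodup_cons.1 hl).1 (hxa ▸ hx)]
    rw [filter_cons_of_pos (by simp), hfilter, ← ih (nodup_cons.1 hl).2]

theorem Perm.eq_of_no_inversion {l₁ l₂ : List α} (hp : l₁ ~ l₂)
    (h : ∀ a b, [a, b] <+ l₁ → [b, a] <+ l₂ → False) : l₁ = l₂ := by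
  induction l₁ generalizing l₂ with
  | nil => exact hp.nil_eq
  | cons a t₁ ih =>
    obtain ⟨b, t₂, rfl⟩ : ∃ b t₂, l₂ = b :: t₂ := by
      cases l₂ with
      | nil => exact absurd hp.eq_nil (cons_ne_nil a t₁)
      | cons b t₂ => exact ⟨b, t₂, rfl⟩
    by_cases hab : a = b
    · subst hab
      rw [ih hp.cons_inv fun x y hxy hyx => h x y (hxy.cons a) (hyx.cons a)]
    · have hb : b ∈ t₁ := by simpa [Ne.symm hab] using hp.mem_iff.2 mem_cons_self
      have ha : a ∈ t₂ := by simpa [hab] using hp.mem_iff.1 mem_cons_self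
      exact (h a b (cons_sublist_cons.2 (singleton_sublist.2 hb))
        (cons_sublist_cons.2 (singleton_sublist.2 ha))).elim

end List

namespace Network

open scoped List

variable {V A : Type} {N : Network V A} {p q : List A} {u v w : V}

variable (N) in
structure IsWalk (p : List A) (v w : V) : Prop where
  ne_nil : p ≠ []
  isChain : p.IsChain fun a b => N.head a = N.tail b
  tail_head : ∀ a ∈ p.head?, N.tail a = v
  head_getLast : ∀ a ∈ p.getLast?, N.head a = w

variable (N) in
structure IsPath (p : List A) (v w : V) : Prop extends N.IsWalk p v w where
  nodup : (N.nodes p).Nodup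

theorem isSTPath_iff : N.IsSTPath p ↔ N.IsPath p N.s N.t :=
  ⟨fun ⟨h₀, h₁, h₂, h₃, h₄⟩ => ⟨⟨h₀, h₁, h₂, h₃⟩, h₄⟩,
    fun ⟨⟨h₀, h₁, h₂, h₃⟩, h₄⟩ => ⟨h₀, h₁, h₂, h₃, h₄⟩⟩

theorem IsWalk.isCycle (h : N.IsWalk p v v) : N.IsCycle p :=
  ⟨h.ne_nil, h.isChain, fun a ha b hb => (h.head_getLast b hb).trans (h.tail_head a ha).symm⟩

theorem isWalk_singleton (a : A) : N.IsWalk [a] (N.tail a) (N.head a) :=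
  ⟨List.cons_ne_nil a [], List.isChain_singleton a, by simp, by simp⟩

theorem IsWalk.append (h₁ : N.IsWalk p u v) (h₂ : N.IsWalk q v w) : N.IsWalk (p ++ q) u w where
  ne_nil := by simp [h₁.ne_nil]
  isChain := h₁.isChain.append h₂.isChain fun x hx y hy =>
    (h₁.head_getLast x hx).trans (h₂.tail_head y hy).symm
  tail_head a ha := h₁.tail_head a <| by rwa [List.head?_append_of_ne_nil _ h₁.ne_nil] at ha
  head_getLast a ha := h₂.head_getLast a <| by
    rwa [List.getLast?_append_of_ne_nil _ h₂.ne_nil] at ha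

theorem IsWalk.of_cons {a : A} (h : N.IsWalk (a :: p) v w) (hp : p ≠ []) :
    N.IsWalk p (N.head a) w where
  ne_nil := hp
  isChain := h.isChain.tail
  tail_head b hb := (List.isChain_cons.1 h.isChain).1 b hb |>.symm
  head_getLast b hb := h.head_getLast b (by rwa [List.getLast?_cons_of_ne_nil hp])

theorem IsWalk.of_append (h : N.IsWalk (p ++ q) u w) (hp : p ≠ []) (hq : q ≠ [])
    (hv : ∀ a ∈ q.head?, N.tail a = v) : N.IsWalk p u v ∧ N.IsWalk q v w := by
  obtain ⟨hcp, hcq, hpq⟩ := List.isChain_append.1 h.isChain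
  refine ⟨⟨hp, hcp, fun a ha => h.tail_head a ?_, fun a ha => ?_⟩,
    ⟨hq, hcq, hv, fun a ha => h.head_getLast a ?_⟩⟩
  · rwa [List.head?_append_of_ne_nil _ hp]
  · obtain ⟨b, hb⟩ := Option.isSome_iff_exists.1 (List.isSome_head?.2 hq)
    exact (hpq a ha b hb).trans (hv b hb)
  · rwa [List.getLast?_append_of_ne_nil _ hq]

theorem IsWalk.nodes_eq_cons (h : N.IsWalk p v w) : N.nodes p = v :: p.map N.head := by
  obtain ⟨a, l, rfl⟩ := List.exists_cons_of_ne_nil h.ne_nil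
  simp [nodes, h.tail_head a rfl]

theorem IsWalk.nodes_eq (h : N.IsWalk p v w) : N.nodes p = p.map N.tail ++ [w] := by
  induction p generalizing v with
  | nil => exact absurd rfl h.ne_nil
  | cons a l ih =>
    rw [h.nodes_eq_cons, List.map_cons, List.map_cons, h.tail_head a rfl, List.cons_append,
      List.cons_inj_right]
    rcases eq_or_ne l [] with rfl | hl
    · simp [h.head_getLast a rfl]
    · rw [← (h.of_cons hl).nodes_eq_cons, ih (h.of_cons hl)]

theorem IsWalk.nodes_append (h₁ : N.IsWalk p u v) (h₂ : N.IsWalk q v w) :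
    N.nodes (p ++ q) = p.map N.tail ++ N.nodes q := by
  rw [(h₁.append h₂).nodes_eq, h₂.nodes_eq, List.map_append, List.append_assoc]

theorem IsWalk.exists_filter_nodes_eq (h : N.IsWalk p v w) {C : V → Bool} (hv : C v)
    (hw : C w) : ∃ ws, (N.nodes p).filter C = v :: (ws ++ [w]) := by
  obtain ⟨a, l, rfl⟩ := List.exists_cons_of_ne_nil h.ne_nil
  exact ⟨(l.map N.tail).filter C, by simp [h.nodes_eq, h.tail_head a rfl, hv, hw]⟩

theorem IsPath.nodup_map_tail (h : N.IsPath p v w) : (p.map N.tail).Nodup :=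
  (List.nodup_append.1 (h.nodes_eq ▸ h.nodup)).1

theorem IsPath.append (h₁ : N.IsPath p u v) (h₂ : N.IsPath q v w)
    (hdisj : ∀ x ∈ p.map N.tail, x ∉ N.nodes q) : N.IsPath (p ++ q) u w where
  toIsWalk := h₁.toIsWalk.append h₂.toIsWalk
  nodup := by
    rw [h₁.nodes_append h₂.toIsWalk]
    exact List.nodup_append.2
      ⟨h₁.nodup_map_tail, h₂.nodup, fun x hx y hy hxy => hdisj x hx (hxy ▸ hy)⟩

theorem IsPath.of_append (h : N.IsPath (p ++ q) u w) (hp : p ≠ []) (hq : q ≠ [])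
    (hv : ∀ a ∈ q.head?, N.tail a = v) : N.IsPath p u v ∧ N.IsPath q v w := by
  obtain ⟨hwp, hwq⟩ := h.toIsWalk.of_append hp hq hv
  have hnodup := h.nodup
  rw [hwp.nodes_append hwq, hwq.nodes_eq_cons] at hnodup
  refine ⟨⟨hwp, ?_⟩, ⟨hwq, ?_⟩⟩
  · rw [hwp.nodes_eq]
    exact hnodup.sublist (List.append_sublist_append_left _ |>.2 (by simp))
  · rw [hwq.nodes_eq_cons]
    exact hnodup.sublist (List.sublist_append_right _ _)

theorem IsWalk.exists_isWalk_of_mem_map_head (h : N.IsWalk p v w) {b : V}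
    (hb : b ∈ p.map N.head) : ∃ r, N.IsWalk r v b := by
  induction p generalizing v with
  | nil => exact absurd rfl h.ne_nil
  | cons a l ih =>
    have hva := h.tail_head a rfl
    rcases List.mem_cons.1 (List.map_cons ▸ hb) with rfl | hb
    · exact ⟨[a], hva ▸ isWalk_singleton a⟩
    · have hl : l ≠ [] := by rintro rfl; simp at hb
      obtain ⟨r, hr⟩ := ih (h.of_cons hl) hb
      exact ⟨a :: r, hva ▸ (isWalk_singleton a).append hr⟩

theorem IsWalk.exists_isWalk_of_pair_sublist (h : N.IsWalk p v w) {a b : V}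
    (hab : [a, b] <+ N.nodes p) : ∃ r, N.IsWalk r a b := by
  induction p generalizing v with
  | nil => simp [nodes] at hab
  | cons x l ih =>
    rw [h.nodes_eq_cons] at hab
    rcases List.sublist_cons_iff.1 hab with hab | ⟨r, hr, hb⟩
    · have hl : l ≠ [] := by rintro rfl; simpa using hab.length_le
      rw [List.map_cons, ← (h.of_cons hl).nodes_eq_cons] at hab
      exact ih (h.of_cons hl) hab
    · obtain ⟨rfl, rfl⟩ := List.cons_eq_cons.1 hr
      exact h.exists_isWalk_of_mem_map_head (List.singleton_sublist.1 hb)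

theorem Acyclic.not_pair_sublist (hN : N.Acyclic) {p₁ p₂ : List A} {u₁ w₁ u₂ w₂ a b : V}
    (h₁ : N.IsWalk p₁ u₁ w₁) (h₂ : N.IsWalk p₂ u₂ w₂)
    (hab : [a, b] <+ N.nodes p₁) (hba : [b, a] <+ N.nodes p₂) : False := by
  obtain ⟨r₁, hr₁⟩ := h₁.exists_isWalk_of_pair_sublist hab
  obtain ⟨r₂, hr₂⟩ := h₂.exists_isWalk_of_pair_sublist hba
  exact hN _ (hr₁.append hr₂).isCycle

theorem Acyclic.filter_nodes_eq (hN : N.Acyclic) {p₁ p₂ : List A} {u₁ w₁ u₂ w₂ : V}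
    (h₁ : N.IsPath p₁ u₁ w₁) (h₂ : N.IsPath p₂ u₂ w₂) {C : V → Bool}
    (hC : ∀ x, C x → x ∈ N.nodes p₁ ∧ x ∈ N.nodes p₂) :
    (N.nodes p₁).filter C = (N.nodes p₂).filter C := by
  refine List.Perm.eq_of_no_inversion ?_ fun a b hab hba => hN.not_pair_sublist
    h₁.toIsWalk h₂.toIsWalk (hab.trans List.filter_sublist) (hba.trans List.filter_sublist)
  refine (List.perm_ext_iff_of_nodup (h₁.nodup.filter C) (h₂.nodup.filter C)).2 fun x => ?_
  simp only [List.mem_filter]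
  exact ⟨fun hx => ⟨(hC x hx.2).2, hx.2⟩, fun hx => ⟨(hC x hx.2).1, hx.2⟩⟩

section Decomposition

variable [DecidableEq V]

variable (N) in
/-- `N.segment p v w` unfolds to `N.takeUntil (N.dropUntil p v) w`. -/
def dropUntil (p : List A) (v : V) : List A := p.dropWhile (N.tail · ≠ v)

variable (N) in
def takeUntil (p : List A) (v : V) : List A := p.takeWhile (N.tail · ≠ v)

variable (N) in
theorem takeUntil_append_dropUntil (p : List A) (v : V) :
    N.takeUntil p v ++ N.dropUntil p v = p :=
  List.takeWhile_append_dropWhile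

theorem dropUntil_ne_nil_iff : N.dropUntil p v ≠ [] ↔ v ∈ p.map N.tail := by
  simp [dropUntil, List.dropWhile_eq_nil_iff]

theorem tail_head_dropUntil : ∀ a ∈ (N.dropUntil p v).head?, N.tail a = v := by
  intro a ha
  have := List.head?_dropWhile_not (N.tail · ≠ v) p
  rw [← dropUntil, ha] at this
  simpa using this

theorem IsWalk.dropUntil_self (h : N.IsWalk p v w) : N.dropUntil p v = p := by
  obtain ⟨a, l, rfl⟩ := List.exists_cons_of_ne_nil h.ne_nil
  exact List.dropWhile_cons_of_neg (by simpa using h.tail_head a rfl)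

theorem IsPath.takeUntil_eq_self (h : N.IsPath p u w) : N.takeUntil p w = p := by
  have hw : w ∉ p.map N.tail := fun hw =>
    (List.nodup_append.1 (h.nodes_eq ▸ h.nodup)).2.2 w hw w (List.mem_singleton_self w) rfl
  exact List.takeWhile_eq_self_iff.2 fun a ha => by
    simpa using fun haw : N.tail a = w => hw (haw ▸ List.mem_map_of_mem ha)

theorem IsPath.isPath_takeUntil_and_dropUntil (h : N.IsPath p u w) (hv : v ∈ p.map N.tail)
    (hvu : v ≠ u) : N.IsPath (N.takeUntil p v) u v ∧ N.IsPath (N.dropUntil p v) v w := by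
  have hT : N.takeUntil p v ≠ [] := by
    obtain ⟨a, l, rfl⟩ := List.exists_cons_of_ne_nil h.ne_nil
    simp [takeUntil, h.tail_head a rfl, Ne.symm hvu]
  rw [← N.takeUntil_append_dropUntil p v] at h
  exact h.of_append hT (dropUntil_ne_nil_iff.2 hv) fun _ => tail_head_dropUntil _

theorem IsPath.dropUntil (h : N.IsPath p u w) (hv : v ∈ p.map N.tail) :
    N.IsPath (N.dropUntil p v) v w := by
  rcases eq_or_ne v u with rfl | hvu
  · rwa [h.dropUntil_self]
  · exact (h.isPath_takeUntil_and_dropUntil hv hvu).2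

theorem IsPath.nodes_eq_takeUntil_append (h : N.IsPath p u w) (hv : v ∈ p.map N.tail) :
    N.nodes p = (N.takeUntil p v).map N.tail ++ N.nodes (N.dropUntil p v) := by
  conv_lhs => rw [h.nodes_eq, ← N.takeUntil_append_dropUntil p v]
  rw [(h.dropUntil hv).nodes_eq, List.map_append, List.append_assoc]

theorem IsPath.nodes_dropUntil_sublist (h : N.IsPath p u w) :
    N.nodes (N.dropUntil p v) <+ N.nodes p := by
  by_cases hv : v ∈ p.map N.tail
  · rw [h.nodes_eq_takeUntil_append hv]
    exact List.sublist_append_right _ _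
  · rw [not_not.1 (mt dropUntil_ne_nil_iff.1 hv)]
    exact List.nil_sublist _

theorem IsPath.dropUntil_dropUntil (h : N.IsPath p u w) {x : V}
    (hv : v ∈ (N.dropUntil p x).map N.tail) :
    N.dropUntil (N.dropUntil p x) v = N.dropUntil p v := by
  have hnodup := h.nodup_map_tail
  conv_rhs => rw [← N.takeUntil_append_dropUntil p x]
  rw [← N.takeUntil_append_dropUntil p x, List.map_append] at hnodup
  refine (List.dropWhile_append_of_pos fun a ha => ?_).symm
  simpa using fun hav : N.tail a = v =>
    List.disjoint_of_nodup_append hnodup (List.mem_map_of_mem ha) (hav ▸ hv)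

theorem IsPath.split_at_next_of_filter_eq (h : N.IsPath p u w) {C : V → Bool} {cur v : V}
    {M : List V} (hinv : (N.nodes (N.dropUntil p cur)).filter C = cur :: v :: M)
    (hwM : w ∈ M) :
    N.IsPath (N.segment p cur v) cur v ∧
      N.nodes (N.dropUntil p cur) =
        (N.segment p cur v).map N.tail ++ N.nodes (N.dropUntil p v) ∧
      ((N.segment p cur v).map N.tail).filter C = [cur] ∧
      (N.nodes (N.dropUntil p v)).filter C = v :: M := by
  have hcur : cur ∈ p.map N.tail :=
    dropUntil_ne_nil_iff.1 fun hnil => by simp [hnil, nodes] at hinv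
  have hP := h.dropUntil hcur
  have hnd := hP.nodup.filter C
  rw [hinv, List.nodup_cons, List.nodup_cons, List.mem_cons, not_or] at hnd
  obtain ⟨⟨hcurv, -⟩, hvM, -⟩ := hnd
  obtain ⟨hvP, hCv⟩ : v ∈ N.nodes (N.dropUntil p cur) ∧ C v := by
    rw [← List.mem_filter, hinv]; simp
  have hvP' : v ∈ (N.dropUntil p cur).map N.tail := by
    rw [hP.nodes_eq] at hvP
    simpa [show v ≠ w from fun hvw => hvM (hvw ▸ hwM)] using hvP
  obtain ⟨hseg, hrest⟩ := hP.isPath_takeUntil_and_dropUntil hvP' (Ne.symm hcurv)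
  rw [h.dropUntil_dropUntil hvP'] at hrest
  have hnodes : N.nodes (N.dropUntil p cur) =
      (N.segment p cur v).map N.tail ++ N.nodes (N.dropUntil p v) := by
    rw [hP.nodes_eq_takeUntil_append hvP', h.dropUntil_dropUntil hvP']
    rfl
  rw [hnodes, List.filter_append, hrest.nodes_eq_cons, List.filter_cons_of_pos hCv] at hinv
  obtain ⟨hseg_filter, -, hM⟩ :=
    (List.append_cons_inj_of_notMem (x₁ := [cur]) (by simpa using Ne.symm hcurv) hvM).1
      hinv.symm
  exact ⟨hseg, hnodes, hseg_filter.symm, by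
    rw [hrest.nodes_eq_cons, List.filter_cons_of_pos hCv, hM]⟩

end Decomposition

section Recombination

variable [DecidableEq V]

theorem segment_self (p : List A) (v : V) : N.segment p v v = [] := by
  change N.takeUntil (N.dropUntil p v) v = []
  rcases hD : N.dropUntil p v with _ | ⟨a, l⟩
  · rfl
  · have hav : N.tail a = v := tail_head_dropUntil (p := p) a (by simp [hD])
    simp [takeUntil, hav]

theorem altConcat_swap (p q : List A) (ws : List V) (cur : V) (b : Bool) :
    N.altConcat q p ws cur b = N.altConcat p q ws cur (!b) := by
  induction ws generalizing cur b with
  | nil => cases b <;> rfl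
  | cons v ws ih => cases b <;> simp [altConcat, ih]

theorem altConcat_cons_true (p q : List A) (ws : List V) (cur v : V) :
    N.altConcat p q (v :: ws) cur true = N.segment p cur v ++ N.altConcat q p ws v true := by
  rw [altConcat, altConcat_swap]
  rfl

theorem altConcat_cons_self (p q : List A) (ws : List V) (v : V) (b : Bool) :
    N.altConcat p q (v :: ws) v b = N.altConcat p q ws v (!b) := by
  simp [altConcat, segment_self]

theorem altConcat_append_sink (p q : List A) (ws : List V) (cur : V) (b : Bool) :
    N.altConcat p q (ws ++ [N.t]) cur b = N.altConcat p q ws cur b := by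
  induction ws generalizing cur b with
  | nil => simp [altConcat, segment_self]
  | cons v ws ih => simp [altConcat, ih]

theorem isPath_altConcat {C : V → Bool} (ws : List V) :
    ∀ {p q : List A} {a b cur : V}, N.IsPath p a N.t → N.IsPath q b N.t →
      (∀ x ∈ N.nodes p, x ∈ N.nodes q → C x) →
      (N.nodes (N.dropUntil p cur)).filter C = cur :: (ws ++ [N.t]) →
      (N.nodes (N.dropUntil q cur)).filter C = cur :: (ws ++ [N.t]) →
      N.IsPath (N.altConcat p q ws cur true) cur N.t ∧
        N.nodes (N.altConcat p q ws cur true) ⊆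
          N.nodes (N.dropUntil p cur) ++ N.nodes (N.dropUntil q cur) := by
  induction ws with
  | nil =>
    intro p q a b cur hp _ _ hinvp _
    have hcur : cur ∈ p.map N.tail :=
      dropUntil_ne_nil_iff.1 fun hnil => by simp [hnil, nodes] at hinvp
    have hP := hp.dropUntil hcur
    rw [show N.altConcat p q [] cur true = N.dropUntil p cur from hP.takeUntil_eq_self]
    exact ⟨hP, List.subset_append_left _ _⟩
  | cons v ws ih =>
    intro p q a b cur hp hq hC hinvp hinvq
    have hndp := hp.nodup.sublist (hp.nodes_dropUntil_sublist (v := cur))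
    have hcur : cur ∉ v :: (ws ++ [N.t]) := by
      have := hndp.filter C
      rw [hinvp] at this
      exact (List.nodup_cons.1 this).1
    obtain ⟨hsegp, hnodesp, hfsegp, hinvp'⟩ := hp.split_at_next_of_filter_eq hinvp (by simp)
    obtain ⟨-, hnodesq, -, hinvq'⟩ := hq.split_at_next_of_filter_eq hinvq (by simp)
    obtain ⟨hR, hRsub⟩ := ih hq hp (fun x hxq hxp => hC x hxp hxq) hinvq' hinvp'
    have hdisj : ∀ x ∈ (N.segment p cur v).map N.tail,
        x ∉ N.nodes (N.altConcat q p ws v true) := by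
      intro x hx hxR
      rw [hnodesp] at hndp
      rcases List.mem_append.1 (hRsub hxR) with hxq | hxp
      -- a common node on the segment must be `cur`, which does not recur after `v`
      · have hxp : x ∈ N.nodes (N.dropUntil p cur) := hnodesp ▸ List.mem_append_left _ hx
        have hxC : C x := hC x (hp.nodes_dropUntil_sublist.subset hxp)
          (hq.nodes_dropUntil_sublist.subset hxq)
        have hxcur : x = cur := by
          simpa [hfsegp] using List.mem_filter.2 ⟨hx, hxC⟩
        subst hxcur
        exact hcur (hinvq' ▸ List.mem_filter.2 ⟨hxq, hxC⟩)
      · exact List.disjoint_of_nodup_append hndp hx hxp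
    rw [altConcat_cons_true]
    refine ⟨hsegp.append hR hdisj, ?_⟩
    rw [hsegp.nodes_append hR.toIsWalk, hnodesp, hnodesq]
    intro x hx
    have := @hRsub x
    simp only [List.mem_append] at hx this ⊢
    tauto

end Recombination

end Network

open Network

theorem stmt8_general {V A : Type} [DecidableEq V]
    (N : Network V A) (hacyc : N.Acyclic)
    (p₁ p₂ : List A) (h₁ : N.IsSTPath p₁) (h₂ : N.IsSTPath p₂)
    (vs : List V) (horder : vs.Sublist (N.nodes p₁))
    (hI : ∀ v, v ∈ vs ↔ v ∈ N.nodes p₁ ∧ v ∈ N.nodes p₂) :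
    N.IsSTPath (N.altConcat p₁ p₂ vs N.s true) ∧
    N.IsSTPath (N.altConcat p₁ p₂ vs N.s false) ∧
    vs.Sublist (N.nodes p₂) := by
  simp only [isSTPath_iff] at h₁ h₂ ⊢
  let C : V → Bool := (· ∈ vs)
  have hC : ∀ x ∈ N.nodes p₁, x ∈ N.nodes p₂ → C x := fun x hx₁ hx₂ => by
    simp [C, hI, hx₁, hx₂]
  have hvs₁ : (N.nodes p₁).filter C = vs := (horder.eq_filter_mem h₁.nodup).symm
  have hvs₂ : (N.nodes p₂).filter C = vs :=
    (hacyc.filter_nodes_eq h₁ h₂ fun x hx => (hI x).1 (by simpa [C] using hx)).symm.trans hvs₁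
  obtain ⟨ws, hws⟩ := h₁.exists_filter_nodes_eq (C := C)
    (hC _ (by simp [h₁.nodes_eq_cons]) (by simp [h₂.nodes_eq_cons]))
    (hC _ (by simp [h₁.nodes_eq]) (by simp [h₂.nodes_eq]))
  rw [hvs₁] at hws
  have hinv₁ : (N.nodes (N.dropUntil p₁ N.s)).filter C = N.s :: (ws ++ [N.t]) := by
    rw [h₁.dropUntil_self, hvs₁, hws]
  have hinv₂ : (N.nodes (N.dropUntil p₂ N.s)).filter C = N.s :: (ws ++ [N.t]) := by
    rw [h₂.dropUntil_self, hvs₂, hws]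
  -- `vs` starts with `s`, so its first segment is empty and the `true` recombination follows `p₂`
  rw [hws, altConcat_cons_self, altConcat_cons_self, altConcat_append_sink, altConcat_append_sink,
    Bool.not_true, Bool.not_false, altConcat_swap, Bool.not_false]
  exact ⟨(isPath_altConcat ws h₂ h₁ (fun x hx hx' => hC x hx' hx) hinv₂ hinv₁).1,
    (isPath_altConcat ws h₁ h₂ hC hinv₁ hinv₂).1, hws ▸ hvs₂ ▸ List.filter_sublist⟩

/-- Lemma 4.8: in an acyclic digraph, for two simple `s`-`t` paths `p₁`
and `p₂` whose set of common nodes is `I`, enumerated as the list `vs` in the order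
of occurrence on `p₁`, the two recombined paths (alternating the segments of `p₁`
and `p₂` between consecutive nodes of `I`, starting with `p₁` resp. with `p₂`) are
well-defined simple `s`-`t` paths; in particular `p₂` traverses the nodes of `I`
in the same order as `p₁`. -/
theorem stmt8 {V A : Type} [DecidableEq V] [DecidableEq A]
    (N : Network V A) (hacyc : N.Acyclic)
    (p₁ p₂ : List A) (h₁ : N.IsSTPath p₁) (h₂ : N.IsSTPath p₂)
    (vs : List V) (horder : vs.Sublist (N.nodes p₁))
    (hI : ∀ v, v ∈ vs ↔ v ∈ N.nodes p₁ ∧ v ∈ N.nodes p₂) :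
    N.IsSTPath (N.altConcat p₁ p₂ vs N.s true) ∧
    N.IsSTPath (N.altConcat p₁ p₂ vs N.s false) ∧
    vs.Sublist (N.nodes p₂) :=
  stmt8_general N hacyc p₁ p₂ h₁ h₂ vs horder hI
end

section
/- Let G be a two-terminal series-parallel graph with terminals (s, t), and let p*, p, and q be simple s-t paths in G. Suppose p intersects p* at a node v and q intersects p* at a node w, where v precedes w on p*. Then there exists a node ξ on the subpath of p* between v and w such that ξ lies on both p and q. -/
open MeasureTheory

/-- Syntax trees of two-terminal series-parallel graphs. -/
inductive SPTerm : Type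
  | edge : SPTerm
  | series : SPTerm → SPTerm → SPTerm
  | parallel : SPTerm → SPTerm → SPTerm

namespace SPTerm

/-- Arc type of the graph described by a series-parallel term. -/
def Arcs : SPTerm → Type
  | edge => Unit
  | series x y => x.Arcs ⊕ y.Arcs
  | parallel x y => x.Arcs ⊕ y.Arcs

/-- Inner (non-terminal) node type of the graph described by a series-parallel term.
In a series composition the extra `Unit` node is the merged sink/source. -/
def Inner : SPTerm → Type
  | edge => Empty
  | series x y => x.Inner ⊕ (Unit ⊕ y.Inner)
  | parallel x y => x.Inner ⊕ y.Inner

/-- Node type: the inner nodes together with the two terminals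
(`Sum.inr false` is the source, `Sum.inr true` the sink). -/
def Node (x : SPTerm) : Type := x.Inner ⊕ Bool

/-- Embedding of the nodes of the left factor into a series composition. -/
def seriesLeft {x y : SPTerm} : x.Node → (x.series y).Node
  | Sum.inl i => Sum.inl (Sum.inl i)
  | Sum.inr false => Sum.inr false
  | Sum.inr true => Sum.inl (Sum.inr (Sum.inl ()))

/-- Embedding of the nodes of the right factor into a series composition. -/
def seriesRight {x y : SPTerm} : y.Node → (x.series y).Node
  | Sum.inl i => Sum.inl (Sum.inr (Sum.inr i))
  | Sum.inr false => Sum.inl (Sum.inr (Sum.inl ()))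
  | Sum.inr true => Sum.inr true

/-- Embedding of the nodes of the left factor into a parallel composition. -/
def parallelLeft {x y : SPTerm} : x.Node → (x.parallel y).Node
  | Sum.inl i => Sum.inl (Sum.inl i)
  | Sum.inr b => Sum.inr b

/-- Embedding of the nodes of the right factor into a parallel composition. -/
def parallelRight {x y : SPTerm} : y.Node → (x.parallel y).Node
  | Sum.inl i => Sum.inl (Sum.inr i)
  | Sum.inr b => Sum.inr b

/-- Tail of an arc of the graph described by a series-parallel term. -/
def tl : (x : SPTerm) → x.Arcs → x.Node
  | edge, _ => Sum.inr false
  | series x y, Sum.inl a => seriesLeft (x.tl a)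
  | series x y, Sum.inr a => seriesRight (y.tl a)
  | parallel x y, Sum.inl a => parallelLeft (x.tl a)
  | parallel x y, Sum.inr a => parallelRight (y.tl a)

/-- Head of an arc of the graph described by a series-parallel term. -/
def hd : (x : SPTerm) → x.Arcs → x.Node
  | edge, _ => Sum.inr true
  | series x y, Sum.inl a => seriesLeft (x.hd a)
  | series x y, Sum.inr a => seriesRight (y.hd a)
  | parallel x y, Sum.inl a => parallelLeft (x.hd a)
  | parallel x y, Sum.inr a => parallelRight (y.hd a)

end SPTerm

/-- A network is two-terminal series-parallel with terminals `(s, t)` if its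
underlying digraph is isomorphic to the graph of some series-parallel term, with
`s` and `t` mapped to the two terminals. -/
def Network.IsSeriesParallel {V A : Type} (N : Network V A) : Prop :=
  ∃ (x : SPTerm) (eV : V ≃ x.Node) (eA : A ≃ x.Arcs),
    (∀ a, eV (N.tail a) = x.tl (eA a)) ∧ (∀ a, eV (N.head a) = x.hd (eA a)) ∧
    eV N.s = Sum.inr false ∧ eV N.t = Sum.inr true

open Network

/-!
Induct on the series-parallel decomposition. An `s`-`t` walk of a parallel composition stays in
one branch, and one of a series composition passes through the merged middle node; this gives an
inductive description `SPTerm.IsPathNodes` of the node sequences of `s`-`t` paths. In a parallel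
composition, if `p` or `q` leaves the branch of `p*`, then `v` or `w` is a terminal. A terminal
lies on every `s`-`t` path, so it serves as `ξ`, unless `v` is the sink or `w` the source, which
the order of `v` and `w` on the simple path `p*` rules out. In a series composition the middle
node lies on all three paths and serves as `ξ` unless `v` and `w` lie on the same side, where the
induction hypothesis applies.
-/

open Function

namespace List

variable {α β : Type*}

theorem sublist_of_map_sublist_map {f : α → β} (hf : Injective f) {l₁ l₂ : List α}
    (h : l₁.map f <+ l₂.map f) : l₁ <+ l₂ := by
  obtain ⟨l, hl, he⟩ := sublist_map_iff.1 h
  rwa [map_injective_iff.2 hf he]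

theorem pair_sublist_of_head?_eq {l : List α} {a b : α} (hb : l.head? = some b) (ha : a ∈ l)
    (hab : a ≠ b) : [b, a] <+ l := by
  obtain _ | ⟨c, t⟩ := l
  · simp at hb
  obtain rfl : c = b := by simpa using hb
  exact (singleton_sublist.2 ((mem_cons.1 ha).resolve_left hab)).cons_cons c

theorem pair_sublist_of_getLast?_eq {l : List α} {a b : α} (hb : l.getLast? = some b)
    (ha : a ∈ l) (hab : a ≠ b) : [a, b] <+ l := by
  rw [← reverse_sublist]
  exact pair_sublist_of_head?_eq (by rwa [head?_reverse]) (mem_reverse.2 ha) hab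

theorem Nodup.not_pair_sublist_of_head?_eq {l : List α} {a b : α} (hl : l.Nodup)
    (hb : l.head? = some b) : ¬ [a, b] <+ l := by
  obtain _ | ⟨c, t⟩ := l
  · simp at hb
  obtain rfl : c = b := by simpa using hb
  intro h
  have hct : c ∈ t := by
    rcases sublist_cons_iff.1 h with h | ⟨r, hr, h⟩
    · exact h.subset (by simp)
    · obtain ⟨-, rfl⟩ := cons.inj hr
      exact singleton_sublist.1 h
  exact (nodup_cons.1 hl).1 hct

theorem Nodup.not_pair_sublist_of_getLast?_eq {l : List α} {a b : α} (hl : l.Nodup)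
    (hb : l.getLast? = some b) : ¬ [b, a] <+ l := by
  rw [← reverse_sublist]
  exact (nodup_reverse.2 hl).not_pair_sublist_of_head?_eq (by rwa [head?_reverse])

theorem not_pair_sublist_append {l₁ l₂ : List α} {a b : α} (ha : a ∉ l₁)
    (hb : b ∉ l₂) : ¬ [a, b] <+ l₁ ++ l₂ := by
  rintro h
  obtain ⟨m₁, m₂, hm, hm₁, hm₂⟩ := sublist_append_iff.1 h
  obtain _ | ⟨c, m₁⟩ := m₁
  · rw [nil_append] at hm
    exact hb (hm₂.subset (by simp [← hm]))
  · obtain ⟨rfl, -⟩ := cons.inj hm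
    exact ha (hm₁.subset (by simp))

theorem append_tail_eq_dropLast_append {l₁ l₂ : List α} {c : α}
    (h₁ : l₁.getLast? = some c) (h₂ : l₂.head? = some c) :
    l₁ ++ l₂.tail = l₁.dropLast ++ l₂ := by
  obtain _ | ⟨d, t⟩ := l₂
  · simp at h₂
  obtain rfl : d = c := by simpa using h₂
  conv_lhs => rw [← dropLast_append_getLast? _ h₁]
  simp

theorem IsChain.exists_eq_map_inl_append_map_inr {R : α ⊕ β → α ⊕ β → Prop}
    (hR : ∀ a b, ¬ R (.inr a) (.inl b)) :
    ∀ {l : List (α ⊕ β)}, l.IsChain R →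
      ∃ (l₁ : List α) (l₂ : List β), l = l₁.map .inl ++ l₂.map .inr
  | [], _ => ⟨[], [], rfl⟩
  | .inl a :: t, h => by
    obtain ⟨l₁, l₂, rfl⟩ := exists_eq_map_inl_append_map_inr hR h.tail
    exact ⟨a :: l₁, l₂, rfl⟩
  | .inr a :: t, h => by
    obtain ⟨l₁, l₂, rfl⟩ := exists_eq_map_inl_append_map_inr hR h.tail
    obtain _ | ⟨b, l₁⟩ := l₁
    · exact ⟨[], a :: l₂, rfl⟩
    · exact absurd h.rel (hR a b)

theorem IsChain.exists_eq_map_inl_or_exists_eq_map_inr {R : α ⊕ β → α ⊕ β → Prop}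
    (hlr : ∀ a b, ¬ R (.inl a) (.inr b)) (hrl : ∀ a b, ¬ R (.inr a) (.inl b))
    {l : List (α ⊕ β)} (h : l.IsChain R) :
    (∃ l' : List α, l = l'.map .inl) ∨ ∃ l' : List β, l = l'.map .inr := by
  obtain ⟨l₁, l₂, rfl⟩ := h.exists_eq_map_inl_append_map_inr hrl
  obtain _ | ⟨a, l₁⟩ := l₁
  · exact .inr ⟨l₂, rfl⟩
  obtain _ | ⟨b, l₂⟩ := l₂
  · exact .inl ⟨a :: l₁, by simp⟩
  have hbd := (isChain_append.1 h).2.2 _ (getLast?_eq_some_getLast (by simp)) _ rfl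
  rw [getLast_map] at hbd
  exact (hlr _ b hbd).elim

end List

section CommonNode

open List

variable {α β : Type*}

def CommonNodeBetween (P R S : List α) (v w : α) : Prop :=
  ∃ ξ, (ξ = v ∨ [v, ξ] <+ P) ∧ (ξ = w ∨ [ξ, w] <+ P) ∧
    ξ ∈ P ∧ ξ ∈ R ∧ ξ ∈ S

def MeetsBetween (P R S : List α) : Prop :=
  ∀ v ∈ R, ∀ w ∈ S, [v, w] <+ P → CommonNodeBetween P R S v w

variable {P R S P' R' S' : List α} {v w : α}

theorem CommonNodeBetween.of_mem_left (hvw : [v, w] <+ P) (hvR : v ∈ R) (hvS : v ∈ S) :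
    CommonNodeBetween P R S v w :=
  ⟨v, .inl rfl, .inr hvw, hvw.subset (by simp), hvR, hvS⟩

theorem CommonNodeBetween.of_mem_right (hvw : [v, w] <+ P) (hwR : w ∈ R) (hwS : w ∈ S) :
    CommonNodeBetween P R S v w :=
  ⟨w, .inr hvw, .inl rfl, hvw.subset (by simp), hwR, hwS⟩

theorem CommonNodeBetween.map (f : α → β) (h : CommonNodeBetween P R S v w) :
    CommonNodeBetween (P.map f) (R.map f) (S.map f) (f v) (f w) := by
  obtain ⟨ξ, hv, hw, hP, hR, hS⟩ := h
  refine ⟨f ξ, ?_, ?_, mem_map_of_mem hP, mem_map_of_mem hR, mem_map_of_mem hS⟩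
  · rcases hv with rfl | hv
    exacts [.inl rfl, .inr (hv.map f)]
  · rcases hw with rfl | hw
    exacts [.inl rfl, .inr (hw.map f)]

theorem CommonNodeBetween.mono (hP : P <+ P') (hR : R ⊆ R') (hS : S ⊆ S')
    (h : CommonNodeBetween P R S v w) : CommonNodeBetween P' R' S' v w := by
  obtain ⟨ξ, hv, hw, hξP, hξR, hξS⟩ := h
  exact ⟨ξ, hv.imp_right (·.trans hP), hw.imp_right (·.trans hP), hP.subset hξP, hR hξR,
    hS hξS⟩

end CommonNode

namespace Network

variable {V A V' A' : Type} {N : Network V A} {N' : Network V' A'}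

def IsWalk_s10 (N : Network V A) (u v : V) (r : List A) : Prop :=
  r ≠ [] ∧ r.IsChain (fun a b => N.head a = N.tail b) ∧
    (∀ a ∈ r.head?, N.tail a = u) ∧ ∀ a ∈ r.getLast?, N.head a = v

theorem IsSTPath.isWalk {p : List A} (h : N.IsSTPath p) : N.IsWalk_s10 N.s N.t p :=
  ⟨h.1, h.2.1, h.2.2.1, h.2.2.2.1⟩

theorem IsSTPath.nodes_nodup {p : List A} (h : N.IsSTPath p) : (N.nodes p).Nodup :=
  h.2.2.2.2

theorem IsWalk_s10.of_append {u w : V} {r₁ r₂ : List A} (h : N.IsWalk_s10 u w (r₁ ++ r₂))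
    (h₁ : r₁ ≠ []) (h₂ : r₂ ≠ []) : ∃ m, N.IsWalk_s10 u m r₁ ∧ N.IsWalk_s10 m w r₂ := by
  obtain ⟨-, hch, hu, hw⟩ := h
  obtain ⟨hch₁, hch₂, hbd⟩ := List.isChain_append.1 hch
  have hlast₁ := List.getLast?_eq_some_getLast h₁
  refine ⟨N.head (r₁.getLast h₁), ⟨h₁, hch₁, fun a ha => hu a ?_, ?_⟩,
    ⟨h₂, hch₂, fun a ha => (hbd _ hlast₁ a ha).symm, fun a ha => hw a ?_⟩⟩
  · simp [List.head?_append, Option.mem_def.1 ha]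
  · intro a ha
    rw [hlast₁, Option.mem_some_iff] at ha
    rw [ha]
  · simp [List.getLast?_append, Option.mem_def.1 ha]

section Hom

variable {φV : V → V'} {φA : A → A'}

theorem nodes_map (ht : ∀ a, φV (N.tail a) = N'.tail (φA a))
    (hh : ∀ a, φV (N.head a) = N'.head (φA a)) (r : List A) :
    N'.nodes (r.map φA) = (N.nodes r).map φV := by
  cases r <;> simp [nodes, ht, hh]

theorem IsWalk_s10.map {u v : V} {r : List A} (h : N.IsWalk_s10 u v r)
    (ht : ∀ a, φV (N.tail a) = N'.tail (φA a)) (hh : ∀ a, φV (N.head a) = N'.head (φA a)) :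
    N'.IsWalk_s10 (φV u) (φV v) (r.map φA) := by
  obtain ⟨hne, hch, hu, hv⟩ := h
  refine ⟨by simpa using hne, (List.isChain_map _).2 (hch.imp fun a b hab => ?_), ?_, ?_⟩
  · rw [← ht, ← hh, hab]
  · simp only [List.head?_map, Option.mem_def, Option.map_eq_some_iff]
    rintro _ ⟨a, ha, rfl⟩
    rw [← ht, hu a ha]
  · simp only [List.getLast?_map, Option.mem_def, Option.map_eq_some_iff]
    rintro _ ⟨a, ha, rfl⟩
    rw [← hh, hv a ha]

theorem IsWalk_s10.exists_of_map {u' v' : V'} {r : List A} (h : N'.IsWalk_s10 u' v' (r.map φA))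
    (hV : Injective φV) (ht : ∀ a, φV (N.tail a) = N'.tail (φA a))
    (hh : ∀ a, φV (N.head a) = N'.head (φA a)) :
    ∃ u v, φV u = u' ∧ φV v = v' ∧ N.IsWalk_s10 u v r := by
  obtain ⟨hne, hch, hu, hv⟩ := h
  replace hne : r ≠ [] := by simpa using hne
  have hhead := List.head?_eq_some_head hne
  have hlast := List.getLast?_eq_some_getLast hne
  refine ⟨N.tail (r.head hne), N.head (r.getLast hne), ?_, ?_, hne, ?_, ?_, ?_⟩
  · rw [ht]; exact hu _ (by simp [hhead])
  · rw [hh]; exact hv _ (by simp [hlast])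
  · exact ((List.isChain_map _).1 hch).imp fun a b hab => hV (by rw [ht, hh, hab])
  · intro a ha
    rw [hhead, Option.mem_some_iff] at ha
    rw [ha]
  · intro a ha
    rw [hlast, Option.mem_some_iff] at ha
    rw [ha]

end Hom

theorem nodes_append {r₁ : List A} (r₂ : List A) (h : r₁ ≠ []) :
    N.nodes (r₁ ++ r₂) = N.nodes r₁ ++ (N.nodes r₂).tail := by
  obtain _ | ⟨a, r₁⟩ := r₁
  · exact absurd rfl h
  cases r₂ <;> simp [nodes]

end Network

attribute [reducible] SPTerm.Node SPTerm.Inner SPTerm.Arcs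

namespace SPTerm

open List

variable {x y : SPTerm}

abbrev source (x : SPTerm) : x.Node := Sum.inr false

abbrev sink (x : SPTerm) : x.Node := Sum.inr true

/-- The graph of `x` as a network; capacities, costs and transit times play no role. -/
def network (x : SPTerm) : Network x.Node x.Arcs :=
  ⟨x.tl, x.hd, fun _ => 0, fun _ => 0, fun _ => 0, x.source, x.sink⟩

/-- The node of `x.series y` in which the sink of `x` is merged with the source of `y`. -/
def mid (x y : SPTerm) : (x.series y).Node := seriesLeft x.sink

theorem seriesLeft_injective : Injective (seriesLeft : x.Node → (x.series y).Node) := by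
  rintro (a | _ | _) (b | _ | _) h <;> simp_all [seriesLeft]

theorem seriesRight_injective : Injective (seriesRight : y.Node → (x.series y).Node) := by
  rintro (a | _ | _) (b | _ | _) h <;> simp_all [seriesRight]

theorem parallelLeft_injective : Injective (parallelLeft : x.Node → (x.parallel y).Node) := by
  rintro (a | _ | _) (b | _ | _) h <;> simp_all [parallelLeft]

theorem parallelRight_injective : Injective (parallelRight : y.Node → (x.parallel y).Node) := by
  rintro (a | _ | _) (b | _ | _) h <;> simp_all [parallelRight]

theorem seriesLeft_eq_seriesRight_iff {n : x.Node} {n' : y.Node} :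
    (seriesLeft n : (x.series y).Node) = seriesRight n' ↔ n = x.sink ∧ n' = y.source := by
  rcases n with a | _ | _ <;> rcases n' with b | _ | _ <;> simp [seriesLeft, seriesRight]

theorem seriesLeft_eq_source_iff {n : x.Node} :
    (seriesLeft n : (x.series y).Node) = (x.series y).source ↔ n = x.source := by
  rcases n with a | _ | _ <;> simp [seriesLeft]

theorem seriesLeft_ne_sink (n : x.Node) :
    (seriesLeft n : (x.series y).Node) ≠ (x.series y).sink := by
  rcases n with a | _ | _ <;> simp [seriesLeft]

theorem seriesRight_eq_sink_iff {n : y.Node} :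
    (seriesRight n : (x.series y).Node) = (x.series y).sink ↔ n = y.sink := by
  rcases n with a | _ | _ <;> simp [seriesRight]

theorem seriesRight_ne_source (n : y.Node) :
    (seriesRight n : (x.series y).Node) ≠ (x.series y).source := by
  rcases n with a | _ | _ <;> simp [seriesRight]

theorem parallelLeft_eq_parallelRight_iff {n : x.Node} {n' : y.Node} :
    (parallelLeft n : (x.parallel y).Node) = parallelRight n' ↔
      ∃ b, n = Sum.inr b ∧ n' = Sum.inr b := by
  rcases n with a | _ | _ <;> rcases n' with b | _ | _ <;> simp [parallelLeft, parallelRight]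

theorem parallelLeft_eq_inr_iff {n : x.Node} {b : Bool} :
    (parallelLeft n : (x.parallel y).Node) = Sum.inr b ↔ n = Sum.inr b := by
  rcases n with a | _ | _ <;> simp [parallelLeft]

theorem parallelRight_eq_inr_iff {n : y.Node} {b : Bool} :
    (parallelRight n : (x.parallel y).Node) = Sum.inr b ↔ n = Sum.inr b := by
  rcases n with a | _ | _ <;> simp [parallelRight]

theorem hd_ne_source : ∀ {x : SPTerm} (a : x.Arcs), x.hd a ≠ x.source
  | edge, _ => by simp [hd]
  | series _ _, .inl a => fun h => hd_ne_source a (seriesLeft_eq_source_iff.1 h)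
  | series _ _, .inr _ => seriesRight_ne_source _
  | parallel _ _, .inl a => fun h => hd_ne_source a (parallelLeft_eq_inr_iff.1 h)
  | parallel _ _, .inr a => fun h => hd_ne_source a (parallelRight_eq_inr_iff.1 h)

theorem tl_ne_sink : ∀ {x : SPTerm} (a : x.Arcs), x.tl a ≠ x.sink
  | edge, _ => by simp [tl]
  | series _ _, .inl _ => seriesLeft_ne_sink _
  | series _ _, .inr a => fun h => tl_ne_sink a (seriesRight_eq_sink_iff.1 h)
  | parallel _ _, .inl a => fun h => tl_ne_sink a (parallelLeft_eq_inr_iff.1 h)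
  | parallel _ _, .inr a => fun h => tl_ne_sink a (parallelRight_eq_inr_iff.1 h)

theorem eq_mid_or_seriesLeft_or_seriesRight (v : (x.series y).Node) :
    v = mid x y ∨ (∃ v', v = seriesLeft v' ∧ v' ≠ x.sink) ∨
      ∃ v', v = seriesRight v' ∧ v' ≠ y.source := by
  rcases v with (a | _ | b) | _ | _
  · exact .inr (.inl ⟨.inl a, rfl, by simp⟩)
  · exact .inl rfl
  · exact .inr (.inr ⟨.inl b, rfl, by simp⟩)
  · exact .inr (.inl ⟨x.source, rfl, by simp⟩)
  · exact .inr (.inr ⟨y.sink, rfl, by simp⟩)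

theorem seriesLeft_not_mem_map_seriesRight {v : x.Node} (hv : v ≠ x.sink) (l : List y.Node) :
    (seriesLeft v : (x.series y).Node) ∉ l.map seriesRight := by
  simp only [mem_map, not_exists, not_and]
  exact fun _ _ h => hv (seriesLeft_eq_seriesRight_iff.1 h.symm).1

theorem seriesRight_not_mem_map_seriesLeft {v : y.Node} (hv : v ≠ y.source) (l : List x.Node) :
    (seriesRight v : (x.series y).Node) ∉ l.map seriesLeft := by
  simp only [mem_map, not_exists, not_and]
  exact fun _ _ h => hv (seriesLeft_eq_seriesRight_iff.1 h).2

/-- The last node of `P₁` and the first node of `P₂` are both taken to `mid x y`, so the latter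
is dropped. -/
def seriesAppend (P₁ : List x.Node) (P₂ : List y.Node) : List (x.series y).Node :=
  P₁.map seriesLeft ++ (P₂.map seriesRight).tail

theorem seriesAppend_eq {P₁ : List x.Node} {P₂ : List y.Node}
    (h₁ : P₁.getLast? = some x.sink) (h₂ : P₂.head? = some y.source) :
    seriesAppend P₁ P₂ = (P₁.map seriesLeft).dropLast ++ P₂.map seriesRight :=
  append_tail_eq_dropLast_append (c := mid x y) (by simp [h₁, mid])
    (by simp [h₂, mid, seriesLeft, seriesRight])

inductive IsPathNodes : (x : SPTerm) → List x.Node → Prop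
  | edge : IsPathNodes edge [edge.source, edge.sink]
  | parallelLeft {x y : SPTerm} {P : List x.Node} :
      IsPathNodes x P → IsPathNodes (x.parallel y) (P.map parallelLeft)
  | parallelRight {x y : SPTerm} {P : List y.Node} :
      IsPathNodes y P → IsPathNodes (x.parallel y) (P.map parallelRight)
  | series {x y : SPTerm} {P₁ : List x.Node} {P₂ : List y.Node} :
      IsPathNodes x P₁ → IsPathNodes y P₂ →
        IsPathNodes (x.series y) (seriesAppend P₁ P₂)

namespace IsPathNodes

theorem head?_eq : ∀ {x : SPTerm} {P : List x.Node}, x.IsPathNodes P → P.head? = some x.source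
  | _, _, .edge => rfl
  | _, _, .parallelLeft h => by simp [h.head?_eq, SPTerm.parallelLeft]
  | _, _, .parallelRight h => by simp [h.head?_eq, SPTerm.parallelRight]
  | _, _, .series h₁ _ => by simp [seriesAppend, head?_append, h₁.head?_eq, seriesLeft]

theorem getLast?_eq :
    ∀ {x : SPTerm} {P : List x.Node}, x.IsPathNodes P → P.getLast? = some x.sink
  | _, _, .edge => rfl
  | _, _, .parallelLeft h => by simp [h.getLast?_eq, SPTerm.parallelLeft]
  | _, _, .parallelRight h => by simp [h.getLast?_eq, SPTerm.parallelRight]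
  | _, _, .series h₁ h₂ => by
    simp [seriesAppend_eq h₁.getLast?_eq h₂.head?_eq, getLast?_append, h₂.getLast?_eq,
      seriesRight]

theorem source_mem {P : List x.Node} (h : x.IsPathNodes P) : x.source ∈ P :=
  mem_of_mem_head? h.head?_eq

theorem sink_mem {P : List x.Node} (h : x.IsPathNodes P) : x.sink ∈ P :=
  mem_of_getLast? h.getLast?_eq

end IsPathNodes

theorem seriesRight_hd_ne_seriesLeft_tl (a : y.Arcs) (b : x.Arcs) :
    (seriesRight (y.hd a) : (x.series y).Node) ≠ seriesLeft (x.tl b) :=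
  fun h => tl_ne_sink b (seriesLeft_eq_seriesRight_iff.1 h.symm).1

theorem parallelLeft_hd_ne_parallelRight_tl (a : x.Arcs) (b : y.Arcs) :
    (parallelLeft (x.hd a) : (x.parallel y).Node) ≠ parallelRight (y.tl b) := by
  rintro h
  obtain ⟨_ | _, h₁, h₂⟩ := parallelLeft_eq_parallelRight_iff.1 h
  exacts [hd_ne_source a h₁, tl_ne_sink b h₂]

theorem parallelRight_hd_ne_parallelLeft_tl (a : y.Arcs) (b : x.Arcs) :
    (parallelRight (y.hd a) : (x.parallel y).Node) ≠ parallelLeft (x.tl b) := by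
  rintro h
  obtain ⟨_ | _, h₁, h₂⟩ := parallelLeft_eq_parallelRight_iff.1 h.symm
  exacts [hd_ne_source a h₂, tl_ne_sink b h₁]

theorem nodes_map_inl_parallel (l : List x.Arcs) :
    (network (x.parallel y)).nodes (l.map .inl) = ((network x).nodes l).map parallelLeft := by
  apply nodes_map <;> exact fun _ => rfl

theorem nodes_map_inr_parallel (l : List y.Arcs) :
    (network (x.parallel y)).nodes (l.map .inr) = ((network y).nodes l).map parallelRight := by
  apply nodes_map <;> exact fun _ => rfl

theorem nodes_series {l₁ : List x.Arcs} (l₂ : List y.Arcs) (h₁ : l₁ ≠ []) :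
    (network (x.series y)).nodes (l₁.map .inl ++ l₂.map .inr) =
      seriesAppend ((network x).nodes l₁) ((network y).nodes l₂) := by
  have hl₁ : (network (x.series y)).nodes (l₁.map .inl) =
      ((network x).nodes l₁).map seriesLeft := by
    apply nodes_map <;> exact fun _ => rfl
  have hl₂ : (network (x.series y)).nodes (l₂.map .inr) =
      ((network y).nodes l₂).map seriesRight := by
    apply nodes_map <;> exact fun _ => rfl
  rw [nodes_append _ (by simpa), hl₁, hl₂, seriesAppend]

theorem exists_of_isWalk_parallel {r : List (x.parallel y).Arcs}
    (hr : (network (x.parallel y)).IsWalk_s10 (x.parallel y).source (x.parallel y).sink r) :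
    (∃ l, r = l.map .inl ∧ (network x).IsWalk_s10 x.source x.sink l) ∨
      ∃ l, r = l.map .inr ∧ (network y).IsWalk_s10 y.source y.sink l := by
  rcases hr.2.1.exists_eq_map_inl_or_exists_eq_map_inr parallelLeft_hd_ne_parallelRight_tl
    parallelRight_hd_ne_parallelLeft_tl with ⟨l, rfl⟩ | ⟨l, rfl⟩
  · obtain ⟨u, v, hu, hv, hl⟩ :=
      hr.exists_of_map (N := network x) parallelLeft_injective (fun _ => rfl) (fun _ => rfl)
    obtain rfl := parallelLeft_eq_inr_iff.1 hu
    obtain rfl := parallelLeft_eq_inr_iff.1 hv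
    exact .inl ⟨l, rfl, hl⟩
  · obtain ⟨u, v, hu, hv, hl⟩ :=
      hr.exists_of_map (N := network y) parallelRight_injective (fun _ => rfl) (fun _ => rfl)
    obtain rfl := parallelRight_eq_inr_iff.1 hu
    obtain rfl := parallelRight_eq_inr_iff.1 hv
    exact .inr ⟨l, rfl, hl⟩

theorem exists_of_isWalk_series {r : List (x.series y).Arcs}
    (hr : (network (x.series y)).IsWalk_s10 (x.series y).source (x.series y).sink r) :
    ∃ l₁ l₂, r = l₁.map .inl ++ l₂.map .inr ∧ l₁ ≠ [] ∧
      (network x).IsWalk_s10 x.source x.sink l₁ ∧ (network y).IsWalk_s10 y.source y.sink l₂ := by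
  obtain ⟨l₁, l₂, rfl⟩ :=
    hr.2.1.exists_eq_map_inl_append_map_inr seriesRight_hd_ne_seriesLeft_tl
  obtain rfl | h₁ := eq_or_ne l₁ []
  · obtain ⟨u, -, hu, -, -⟩ := IsWalk_s10.exists_of_map (N := network y) (by simpa using hr)
      seriesRight_injective (fun _ => rfl) (fun _ => rfl)
    exact absurd hu (seriesRight_ne_source u)
  obtain rfl | h₂ := eq_or_ne l₂ []
  · obtain ⟨-, v, -, hv, -⟩ := IsWalk_s10.exists_of_map (N := network x) (by simpa using hr)
      seriesLeft_injective (fun _ => rfl) (fun _ => rfl)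
    exact absurd hv (seriesLeft_ne_sink v)
  obtain ⟨m, hr₁, hr₂⟩ := hr.of_append (by simpa using h₁) (by simpa using h₂)
  obtain ⟨u, m₁, hu, hm₁, hl₁⟩ :=
    hr₁.exists_of_map (N := network x) seriesLeft_injective (fun _ => rfl) (fun _ => rfl)
  obtain ⟨m₂, t, hm₂, ht, hl₂⟩ :=
    hr₂.exists_of_map (N := network y) seriesRight_injective (fun _ => rfl) (fun _ => rfl)
  obtain ⟨rfl, rfl⟩ := seriesLeft_eq_seriesRight_iff.1 (hm₁.trans hm₂.symm)
  obtain rfl := seriesLeft_eq_source_iff.1 hu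
  obtain rfl := seriesRight_eq_sink_iff.1 ht
  exact ⟨l₁, l₂, rfl, h₁, hl₁, hl₂⟩

theorem isPathNodes_nodes : ∀ {x : SPTerm} {r : List x.Arcs},
    (network x).IsWalk_s10 x.source x.sink r → x.IsPathNodes ((network x).nodes r)
  | edge, r, ⟨hne, hch, _, _⟩ => by
    obtain _ | ⟨a, _ | ⟨b, r⟩⟩ := r
    · exact absurd rfl hne
    · exact .edge
    · exact absurd hch.rel (by simp [network, hd, tl])
  | parallel x y, r, hr => by
    rcases exists_of_isWalk_parallel hr with ⟨l, rfl, hl⟩ | ⟨l, rfl, hl⟩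
    · rw [nodes_map_inl_parallel]
      exact .parallelLeft (isPathNodes_nodes hl)
    · rw [nodes_map_inr_parallel]
      exact .parallelRight (isPathNodes_nodes hl)
  | series x y, r, hr => by
    obtain ⟨l₁, l₂, rfl, h₁, hl₁, hl₂⟩ := exists_of_isWalk_series hr
    rw [nodes_series _ h₁]
    exact .series (isPathNodes_nodes hl₁) (isPathNodes_nodes hl₂)

section Series

variable {P₁ : List x.Node} {P₂ : List y.Node}

theorem map_seriesLeft_sublist_seriesAppend (P₁ : List x.Node) (P₂ : List y.Node) :
    P₁.map seriesLeft <+ seriesAppend P₁ P₂ :=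
  sublist_append_left _ _

theorem map_seriesRight_sublist_seriesAppend (h₁ : x.IsPathNodes P₁)
    (h₂ : y.IsPathNodes P₂) :
    P₂.map seriesRight <+ seriesAppend P₁ P₂ := by
  rw [seriesAppend_eq h₁.getLast?_eq h₂.head?_eq]
  exact sublist_append_right _ _

theorem mid_mem_seriesAppend (h₁ : x.IsPathNodes P₁) : mid x y ∈ seriesAppend P₁ P₂ :=
  mem_append_left _ (mem_map_of_mem h₁.sink_mem)

theorem sublist_of_map_seriesLeft_sublist {l : List x.Node} (hl : x.sink ∉ l)
    (h : l.map seriesLeft <+ seriesAppend P₁ P₂) : l <+ P₁ := by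
  refine sublist_of_map_sublist_map seriesLeft_injective (h.of_sublist_append_left ?_)
  rintro _ hmap htail
  obtain ⟨v, hv, rfl⟩ := mem_map.1 hmap
  exact seriesLeft_not_mem_map_seriesRight (ne_of_mem_of_not_mem hv hl) P₂ (mem_of_mem_tail htail)

theorem sublist_of_map_seriesRight_sublist (h₁ : x.IsPathNodes P₁) (h₂ : y.IsPathNodes P₂)
    {l : List y.Node} (hl : y.source ∉ l) (h : l.map seriesRight <+ seriesAppend P₁ P₂) :
    l <+ P₂ := by
  rw [seriesAppend_eq h₁.getLast?_eq h₂.head?_eq] at h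
  refine sublist_of_map_sublist_map seriesRight_injective (h.of_sublist_append_right ?_)
  rintro _ hmap hinit
  obtain ⟨v, hv, rfl⟩ := mem_map.1 hmap
  exact seriesRight_not_mem_map_seriesLeft (ne_of_mem_of_not_mem hv hl) P₁
    (mem_of_mem_dropLast hinit)

theorem mem_of_seriesLeft_mem {v : x.Node} (hv : v ≠ x.sink)
    (h : seriesLeft v ∈ seriesAppend P₁ P₂) : v ∈ P₁ :=
  singleton_sublist.1 <|
    sublist_of_map_seriesLeft_sublist (by simpa using hv.symm) (singleton_sublist.2 h)

theorem mem_of_seriesRight_mem (h₁ : x.IsPathNodes P₁) (h₂ : y.IsPathNodes P₂) {v : y.Node}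
    (hv : v ≠ y.source) (h : seriesRight v ∈ seriesAppend P₁ P₂) : v ∈ P₂ :=
  singleton_sublist.1 <|
    sublist_of_map_seriesRight_sublist h₁ h₂ (by simpa using hv.symm) (singleton_sublist.2 h)

theorem meetsBetween_seriesAppend {R₁ S₁ : List x.Node} {R₂ S₂ : List y.Node}
    (hP₁ : x.IsPathNodes P₁) (hP₂ : y.IsPathNodes P₂) (hR₁ : x.IsPathNodes R₁)
    (hR₂ : y.IsPathNodes R₂) (hS₁ : x.IsPathNodes S₁) (hS₂ : y.IsPathNodes S₂)
    (h₁ : MeetsBetween P₁ R₁ S₁) (h₂ : MeetsBetween P₂ R₂ S₂) :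
    MeetsBetween (seriesAppend P₁ P₂) (seriesAppend R₁ R₂) (seriesAppend S₁ S₂) := by
  have hP₁P := map_seriesLeft_sublist_seriesAppend P₁ P₂
  have hP₂P := map_seriesRight_sublist_seriesAppend hP₁ hP₂
  intro v hv w hw hvw
  rcases eq_mid_or_seriesLeft_or_seriesRight v with rfl | ⟨v, rfl, hv'⟩ | ⟨v, rfl, hv'⟩
  · exact .of_mem_left hvw hv (mid_mem_seriesAppend hS₁)
  all_goals
    rcases eq_mid_or_seriesLeft_or_seriesRight w with rfl | ⟨w, rfl, hw'⟩ | ⟨w, rfl, hw'⟩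
  all_goals try exact .of_mem_right hvw (mid_mem_seriesAppend hR₁) hw
  · have hvw₁ :=
      sublist_of_map_seriesLeft_sublist (l := [v, w]) (by simp [hv'.symm, hw'.symm]) hvw
    exact ((h₁ v (mem_of_seriesLeft_mem hv' hv) w (mem_of_seriesLeft_mem hw' hw) hvw₁).map
      seriesLeft).mono hP₁P (map_seriesLeft_sublist_seriesAppend R₁ R₂).subset
      (map_seriesLeft_sublist_seriesAppend S₁ S₂).subset
  · have hvP₁ := mem_of_seriesLeft_mem hv' (hvw.subset (by simp))
    have hwP₂ := mem_of_seriesRight_mem hP₁ hP₂ hw' (hvw.subset (by simp))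
    refine ⟨mid x y, .inr ?_, .inr ?_, mid_mem_seriesAppend hP₁, mid_mem_seriesAppend hR₁,
      mid_mem_seriesAppend hS₁⟩
    · exact ((pair_sublist_of_getLast?_eq hP₁.getLast?_eq hvP₁ hv').map _).trans hP₁P
    · exact ((pair_sublist_of_head?_eq hP₂.head?_eq hwP₂ hw').map _).trans hP₂P
  · -- `v` comes after the merged node on `P` and `w` before it
    exact absurd hvw (not_pair_sublist_append (seriesRight_not_mem_map_seriesLeft hv' P₁)
      fun h => seriesLeft_not_mem_map_seriesRight hw' P₂ (mem_of_mem_tail h))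
  · have hvw₂ := sublist_of_map_seriesRight_sublist (l := [v, w]) hP₁ hP₂
      (by simp [hv'.symm, hw'.symm]) hvw
    exact ((h₂ v (mem_of_seriesRight_mem hR₁ hR₂ hv' hv) w
      (mem_of_seriesRight_mem hS₁ hS₂ hw' hw) hvw₂).map seriesRight).mono hP₂P
      (map_seriesRight_sublist_seriesAppend hR₁ hR₂).subset
      (map_seriesRight_sublist_seriesAppend hS₁ hS₂).subset

end Series

theorem commonNodeBetween_of_terminal {P R S : List x.Node} (hP : x.IsPathNodes P)
    (hR : x.IsPathNodes R) (hS : x.IsPathNodes S) (hnd : P.Nodup) {v w : x.Node} (hv : v ∈ R)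
    (hw : w ∈ S) (hvw : [v, w] <+ P) (h : (∃ b, v = Sum.inr b) ∨ ∃ b, w = Sum.inr b) :
    CommonNodeBetween P R S v w := by
  rcases h with ⟨_ | _, rfl⟩ | ⟨_ | _, rfl⟩
  · exact .of_mem_left hvw hv hS.source_mem
  · exact absurd hvw (hnd.not_pair_sublist_of_getLast?_eq hP.getLast?_eq)
  · exact absurd hvw (hnd.not_pair_sublist_of_head?_eq hP.head?_eq)
  · exact .of_mem_right hvw hR.sink_mem hw

theorem IsPathNodes.exists_eq_map_parallelLeft {R : List (x.parallel y).Node}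
    (hR : (x.parallel y).IsPathNodes R) {P : List x.Node} {v : (x.parallel y).Node}
    (hv : ∀ b, v ≠ Sum.inr b) (hvP : v ∈ P.map SPTerm.parallelLeft) (hvR : v ∈ R) :
    ∃ R', x.IsPathNodes R' ∧ R = R'.map SPTerm.parallelLeft := by
  cases hR with
  | parallelLeft hR => exact ⟨_, hR, rfl⟩
  | parallelRight =>
    obtain ⟨a, -, rfl⟩ := mem_map.1 hvP
    obtain ⟨b, -, hb⟩ := mem_map.1 hvR
    obtain ⟨c, rfl, -⟩ := parallelLeft_eq_parallelRight_iff.1 hb.symm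
    exact (hv c rfl).elim

theorem IsPathNodes.exists_eq_map_parallelRight {R : List (x.parallel y).Node}
    (hR : (x.parallel y).IsPathNodes R) {P : List y.Node} {v : (x.parallel y).Node}
    (hv : ∀ b, v ≠ Sum.inr b) (hvP : v ∈ P.map SPTerm.parallelRight) (hvR : v ∈ R) :
    ∃ R', y.IsPathNodes R' ∧ R = R'.map SPTerm.parallelRight := by
  cases hR with
  | parallelLeft =>
    obtain ⟨a, -, rfl⟩ := mem_map.1 hvP
    obtain ⟨b, -, hb⟩ := mem_map.1 hvR
    obtain ⟨c, -, rfl⟩ := parallelLeft_eq_parallelRight_iff.1 hb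
    exact (hv c rfl).elim
  | parallelRight hR => exact ⟨_, hR, rfl⟩

theorem IsPathNodes.meetsBetween : ∀ {x : SPTerm} {P R S : List x.Node}, x.IsPathNodes P →
    x.IsPathNodes R → x.IsPathNodes S → P.Nodup → MeetsBetween P R S
  | .edge, P, _, S, hP, .edge, hS, hnd => fun v hv w hw hvw =>
    commonNodeBetween_of_terminal hP .edge hS hnd hv hw hvw <| .inl <| by
      rcases mem_pair.1 hv with rfl | rfl <;> exact ⟨_, rfl⟩
  | .parallel x y, P, R, S, hP, hR, hS, hnd => fun v hv w hw hvw => by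
    by_cases hterm : (∃ b, v = Sum.inr b) ∨ ∃ b, w = Sum.inr b
    · exact commonNodeBetween_of_terminal hP hR hS hnd hv hw hvw hterm
    push Not at hterm
    have hvP : v ∈ P := hvw.subset (by simp)
    have hwP : w ∈ P := hvw.subset (by simp)
    cases hP with
    | parallelLeft hP =>
      obtain ⟨R', hR', rfl⟩ := hR.exists_eq_map_parallelLeft hterm.1 hvP hv
      obtain ⟨S', hS', rfl⟩ := hS.exists_eq_map_parallelLeft hterm.2 hwP hw
      obtain ⟨v', hv', rfl⟩ := mem_map.1 hv
      obtain ⟨w', hw', rfl⟩ := mem_map.1 hw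
      exact (hP.meetsBetween hR' hS' (hnd.of_map _) v' hv' w' hw'
        (sublist_of_map_sublist_map parallelLeft_injective hvw)).map _
    | parallelRight hP =>
      obtain ⟨R', hR', rfl⟩ := hR.exists_eq_map_parallelRight hterm.1 hvP hv
      obtain ⟨S', hS', rfl⟩ := hS.exists_eq_map_parallelRight hterm.2 hwP hw
      obtain ⟨v', hv', rfl⟩ := mem_map.1 hv
      obtain ⟨w', hw', rfl⟩ := mem_map.1 hw
      exact (hP.meetsBetween hR' hS' (hnd.of_map _) v' hv' w' hw'
        (sublist_of_map_sublist_map parallelRight_injective hvw)).map _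
  | .series x y, _, _, _, .series hP₁ hP₂, .series hR₁ hR₂, .series hS₁ hS₂, hnd =>
    meetsBetween_seriesAppend hP₁ hP₂ hR₁ hR₂ hS₁ hS₂
      (hP₁.meetsBetween hR₁ hS₁
        ((hnd.sublist (map_seriesLeft_sublist_seriesAppend _ _)).of_map _))
      (hP₂.meetsBetween hR₂ hS₂
        ((hnd.sublist (map_seriesRight_sublist_seriesAppend hP₁ hP₂)).of_map _))

end SPTerm

theorem stmt10_general {V A : Type}
    (N : Network V A) (hsp : N.IsSeriesParallel)
    (pstar p q : List A)
    (hps : N.IsSTPath pstar) (hp : N.IsSTPath p) (hq : N.IsSTPath q)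
    (v w : V) (hvp : v ∈ N.nodes p) (hwq : w ∈ N.nodes q)
    (hvw : [v, w].Sublist (N.nodes pstar)) :
    ∃ ξ : V,
      (ξ = v ∨ [v, ξ].Sublist (N.nodes pstar)) ∧
      (ξ = w ∨ [ξ, w].Sublist (N.nodes pstar)) ∧
      ξ ∈ N.nodes pstar ∧ ξ ∈ N.nodes p ∧ ξ ∈ N.nodes q := by
  obtain ⟨x, eV, eA, htl, hhd, hs, ht⟩ := hsp
  have hpath {r : List A} (hr : N.IsSTPath r) : x.IsPathNodes ((N.nodes r).map eV) := by
    rw [← nodes_map (N' := x.network) htl hhd]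
    apply SPTerm.isPathNodes_nodes
    have hwalk := hr.isWalk.map (N' := x.network) htl hhd
    rwa [hs, ht] at hwalk
  have hmeet := (hpath hps).meetsBetween (hpath hp) (hpath hq) (hps.nodes_nodup.map eV.injective)
  have hcommon := (hmeet (eV v) (List.mem_map_of_mem hvp) (eV w) (List.mem_map_of_mem hwq)
    (hvw.map eV)).map eV.symm
  simp only [List.map_map, Equiv.symm_comp_self, List.map_id, Equiv.symm_apply_apply] at hcommon
  exact hcommon

/-- Lemma 4.13: in a two-terminal series-parallel graph, if `p` meets
a path `p*` at node `v` and `q` meets `p*` at node `w`, where `v` precedes `w` on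
`p*`, then `p` and `q` have a common node `ξ` lying on the subpath of `p*` between
`v` and `w`. -/
theorem stmt10 {V A : Type} [DecidableEq V] [DecidableEq A]
    (N : Network V A) (hsp : N.IsSeriesParallel)
    (pstar p q : List A)
    (hps : N.IsSTPath pstar) (hp : N.IsSTPath p) (hq : N.IsSTPath q)
    (v w : V) (hvp : v ∈ N.nodes p) (hwq : w ∈ N.nodes q)
    (hvw : [v, w].Sublist (N.nodes pstar)) :
    ∃ ξ : V,
      (ξ = v ∨ [v, ξ].Sublist (N.nodes pstar)) ∧
      (ξ = w ∨ [ξ, w].Sublist (N.nodes pstar)) ∧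
      ξ ∈ N.nodes pstar ∧ ξ ∈ N.nodes p ∧ ξ ∈ N.nodes q :=
  stmt10_general N hsp pstar p q hps hp hq v w hvp hwq hvw
end
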